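/- arXiv:2307.14195 — 10 statements merged into one kernel-verified Lean document; each statement's English description precedes it below -/
import Mathlib

section
/- Let P = {p_1, ..., p_n} be a finite point set in R^d in general position (every subset of size at most d+1 is affinely independent). Then for every non-zero affine dependency z of P, there exists another non-zero affine dependency z' of P such that sign(z') ≤ sign(z) coordinatewise (where 0 ≤ + and 0 ≤ -, and +,- are incomparable) and the support of z' has size exactly d+2. -/
/-!
Induct on the size of the support of `z`. Supports of size at most `d + 1` are excluded by
general position. If the support has more than `d + 2` elements, any `d + 2` of them carry a
non-zero dependency `w`, because the lifted points `(p_i, 1)` lie in a space of dimension `d + 1`;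
moving from `z` along `w` until the first coordinate vanishes gives a dependency that conforms in
sign to `z` and has smaller support.
-/

open Finset Module

section Dependencies

variable {ι : Type*} (k : Type*) {V : Type*} [Fintype ι] [Field k] [AddCommGroup V] [Module k V]

/-- Affine dependencies of `P` are the linear dependencies of the lifted points `(P i, 1)`. -/
def affineDependencies (P : ι → V) : Submodule k (ι → k) :=
  LinearMap.ker (Fintype.linearCombination k fun i => (P i, (1 : k)))

variable {k}

theorem mem_affineDependencies {P : ι → V} {z : ι → k} :
    z ∈ affineDependencies k P ↔ ∑ i, z i • P i = 0 ∧ ∑ i, z i = 0 := by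
  simp [affineDependencies, Fintype.linearCombination_apply, Prod.ext_iff, Prod.fst_sum,
    Prod.snd_sum]

theorem exists_ne_zero_mem_affineDependencies_of_card_lt [FiniteDimensional k V] (P : ι → V)
    (T : Finset ι) (hT : finrank k V + 1 < #T) :
    ∃ w ∈ affineDependencies k P, w ≠ 0 ∧ ∀ i ∉ T, w i = 0 := by
  have hdep : ¬ LinearIndepOn k (fun i => (P i, (1 : k))) (T : Set ι) := fun h => by
    have := h.fintype_card_le_finrank
    simp only [Finset.coe_sort_coe, Fintype.card_coe, finrank_prod, finrank_self] at this
    omega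
  obtain ⟨f, hfT, hf, hf0⟩ := linearDepOn_iff'.1 hdep
  refine ⟨f, ?_, by simpa using hf0, fun i hi => (Finsupp.mem_supported' k f).1 hfT i hi⟩
  rw [affineDependencies, LinearMap.mem_ker,
    ← Finsupp.linearCombination_eq_fintype_linearCombination_apply]
  simpa using hf

theorem eq_zero_of_affineIndependent_support [DecidableEq k] {P : ι → V} {z : ι → k}
    (hz : z ∈ affineDependencies k P)
    (hind : AffineIndependent k fun i : ({i | z i ≠ 0} : Finset ι) => P i) : z = 0 := by
  obtain ⟨hdep, hsum⟩ := mem_affineDependencies.1 hz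
  have hsum' : ∑ i : ({i | z i ≠ 0} : Finset ι), z i = 0 := by
    rw [Finset.sum_coe_sort, Finset.sum_filter_ne_zero, hsum]
  have hdep' : ∑ i : ({i | z i ≠ 0} : Finset ι), z i • P i = 0 := by
    rw [Finset.sum_coe_sort _ fun i => z i • P i,
      Finset.sum_filter_of_ne fun i _ h => left_ne_zero_of_smul h, hdep]
  funext i
  by_contra hi
  exact hi (hind.eq_zero_of_sum_eq_zero hsum' hdep' ⟨i, by simpa using hi⟩ (mem_univ _))

end Dependencies

section Signs

variable {ι : Type*}

theorem eq_zero_or_sign_eq_of_mul_nonneg {a b : ℝ} (h : 0 ≤ a * b) (hb : b = 0 → a = 0) :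
    a = 0 ∨ Real.sign a = Real.sign b := by
  rcases lt_trichotomy a 0 with ha | rfl | ha <;> rcases lt_trichotomy b 0 with hb' | rfl | hb'
  all_goals first
    | nlinarith
    | simp [Real.sign_of_neg, Real.sign_of_pos, *]

def SignConforms (x y : ι → ℝ) : Prop :=
  ∀ i, x i = 0 ∨ Real.sign (x i) = Real.sign (y i)

theorem SignConforms.refl (x : ι → ℝ) : SignConforms x x := fun _ => Or.inr rfl

theorem SignConforms.eq_zero {x y : ι → ℝ} (h : SignConforms x y) {i : ι} (hi : y i = 0) :
    x i = 0 :=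
  (h i).elim id fun hs => Real.sign_eq_zero_iff.1 (by rw [hs, hi, Real.sign_zero])

theorem SignConforms.trans {x y z : ι → ℝ} (hxy : SignConforms x y) (hyz : SignConforms y z) :
    SignConforms x z := fun i =>
  (hyz i).elim (fun hy => Or.inl (hxy.eq_zero hy)) fun hs => (hxy i).imp_right (·.trans hs)

theorem SignConforms.support_subset [Fintype ι] {x y : ι → ℝ} (h : SignConforms x y) :
    ({i | x i ≠ 0} : Finset ι) ⊆ ({i | y i ≠ 0} : Finset ι) := by
  intro i
  simpa using mt h.eq_zero

theorem exists_signConforms_sub_smul_of_mul_pos [Fintype ι] {z w : ι → ℝ}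
    (hwz : ∀ i, z i = 0 → w i = 0) {j : ι} (hj : 0 < z j * w j) :
    ∃ t : ℝ, SignConforms (z - t • w) z ∧ ∃ i, z i ≠ 0 ∧ (z - t • w) i = 0 := by
  obtain ⟨i₀, hi₀, hmin⟩ :=
    Finset.exists_min_image ({i | 0 < z i * w i} : Finset ι) (fun i => z i / w i) ⟨j, by simpa⟩
  replace hi₀ : 0 < z i₀ * w i₀ := by simpa using hi₀
  have hw₀ : w i₀ ≠ 0 := right_ne_zero_of_mul hi₀.ne'
  have ht : 0 < z i₀ / w i₀ := by
    rw [← mul_div_mul_right (z i₀) (w i₀) hw₀]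
    exact div_pos hi₀ (mul_self_pos.2 hw₀)
  set t := z i₀ / w i₀
  -- `t` is the largest step along `w` after which no coordinate of `z` has changed sign
  have hstep : ∀ i, t * (z i * w i) ≤ z i ^ 2 := by
    intro i
    by_cases hi : 0 < z i * w i
    · have hwi : w i ≠ 0 := right_ne_zero_of_mul hi.ne'
      calc t * (z i * w i) ≤ z i / w i * (z i * w i) :=
            mul_le_mul_of_nonneg_right (hmin i (by simpa using hi)) hi.le
        _ = z i ^ 2 := by field_simp
    · nlinarith
  refine ⟨t, fun i => ?_, i₀, left_ne_zero_of_mul hi₀.ne', ?_⟩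
  · refine eq_zero_or_sign_eq_of_mul_nonneg ?_ fun h => by simp [h, hwz i h]
    simp only [Pi.sub_apply, Pi.smul_apply, smul_eq_mul]
    nlinarith [hstep i]
  · simp [t, div_mul_cancel₀ _ hw₀]

theorem exists_signConforms_sub_smul [Fintype ι] {z w : ι → ℝ} (hw : w ≠ 0)
    (hwz : ∀ i, z i = 0 → w i = 0) :
    ∃ t : ℝ, SignConforms (z - t • w) z ∧ ∃ i, z i ≠ 0 ∧ (z - t • w) i = 0 := by
  obtain ⟨j, hj⟩ := Function.ne_iff.1 hw
  have hzj : z j ≠ 0 := fun h => hj (hwz j h)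
  rcases (mul_ne_zero hzj hj).lt_or_gt with hneg | hpos
  · obtain ⟨t, ht⟩ := exists_signConforms_sub_smul_of_mul_pos (w := -w)
      (fun i h => by simp [hwz i h]) (j := j) (by simpa using neg_pos.2 hneg)
    exact ⟨-t, by simpa using ht⟩
  · exact exists_signConforms_sub_smul_of_mul_pos hwz hpos

end Signs

theorem exists_signConforms_mem_affineDependencies_card_support_eq {ι V : Type*} [Fintype ι]
    [AddCommGroup V] [Module ℝ V] [FiniteDimensional ℝ V] {P : ι → V} {d : ℕ}
    (hd : finrank ℝ V ≤ d)
    (hgen : ∀ s : Finset ι, #s ≤ d + 1 → AffineIndependent ℝ fun i : s => P i)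
    {z : ι → ℝ} (hz : z ≠ 0) (hdep : z ∈ affineDependencies ℝ P) :
    ∃ z' ∈ affineDependencies ℝ P, z' ≠ 0 ∧ SignConforms z' z ∧
      #{i | z' i ≠ 0} = d + 2 := by
  induction hN : #{i | z i ≠ 0} using Nat.strong_induction_on generalizing z with
  | _ N ih =>
  obtain hlt | rfl | hgt := lt_trichotomy N (d + 2)
  · exact absurd (eq_zero_of_affineIndependent_support hdep (hgen _ (by omega))) hz
  · exact ⟨z, hdep, hz, SignConforms.refl z, hN⟩
  obtain ⟨T, hTS, hT⟩ := Finset.exists_subset_card_eq (show d + 2 ≤ #{i | z i ≠ 0} by omega)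
  obtain ⟨w, hwdep, hw, hwT⟩ :=
    exists_ne_zero_mem_affineDependencies_of_card_lt (k := ℝ) P T (by omega)
  have hwz : ∀ i, z i = 0 → w i = 0 := fun i hi => hwT i fun hiT => by simpa [hi] using hTS hiT
  obtain ⟨t, hconf, i₀, hzi₀, hi₀⟩ := exists_signConforms_sub_smul hw hwz
  have hne : z - t • w ≠ 0 := by
    obtain ⟨j, hjS, hjT⟩ := Finset.exists_mem_notMem_of_card_lt_card (s := T)
      (t := {i | z i ≠ 0}) (by omega)
    intro h
    exact (by simpa using hjS : z j ≠ 0) (by simpa [hwT j hjT] using congrFun h j)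
  have hsupp : #{i | (z - t • w) i ≠ 0} < N :=
    hN ▸ Finset.card_lt_card ((Finset.ssubset_iff_of_subset hconf.support_subset).2
      ⟨i₀, by simpa using hzi₀, by simpa⟩)
  obtain ⟨z', hz'dep, hz', hz'conf, hz'card⟩ :=
    ih _ hsupp hne (sub_mem hdep (Submodule.smul_mem _ t hwdep)) rfl
  exact ⟨z', hz'dep, hz', hz'conf.trans hconf, hz'card⟩

/-- For a point set in general position in ℝ^d, every non-zero affine
dependency dominates (in sign pattern) a non-zero affine dependency with support of
size exactly d+2. -/
theorem stmt_0 (d n : ℕ) (P : Fin n → (Fin d → ℝ))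
    (hgen : ∀ s : Finset (Fin n), s.card ≤ d + 1 →
      AffineIndependent ℝ (fun i : s => P i))
    (z : Fin n → ℝ) (hz : z ≠ 0)
    (hdep : ∑ i, z i • P i = 0) (hsum : ∑ i, z i = 0) :
    ∃ z' : Fin n → ℝ, z' ≠ 0 ∧
      (∑ i, z' i • P i = 0) ∧ (∑ i, z' i = 0) ∧
      (∀ i, z' i = 0 ∨ Real.sign (z' i) = Real.sign (z i)) ∧
      (Finset.univ.filter (fun i => z' i ≠ 0)).card = d + 2 := by
  obtain ⟨z', hz'dep, hz', hconf, hcard⟩ :=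
    exists_signConforms_mem_affineDependencies_card_support_eq (finrank_fin_fun ℝ).le hgen hz
      (mem_affineDependencies.2 ⟨hdep, hsum⟩)
  obtain ⟨hz'P, hz'sum⟩ := mem_affineDependencies.1 hz'dep
  exact ⟨z', hz', hz'P, hz'sum, hconf, hcard⟩
end

section
/- Let P_1 and P_2 be finite point sets in R^d such that P_1 ∪ P_2 is in general position. If conv(P_1) ∩ conv(P_2) strictly contains conv(P_1 ∩ P_2), then there exist disjoint nonempty subsets Q_1 ⊆ P_1 and Q_2 ⊆ P_2 with |Q_1 ∪ Q_2| = d+2 and conv(Q_1) ∩ conv(Q_2) ≠ ∅. -/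
/-!
Pick `x ∈ conv P₁ ∩ conv P₂` outside `conv (P₁ ∩ P₂)`. A common point `z` of the two sides can be
removed from one of them: `x` lies on segments `[z, a]` and `[z, b]` with `a ∈ conv (P₁ \ {z})`,
`b ∈ conv (P₂ \ {z})`; these lie on one ray from `z`, so the nearer of `a`, `b` lies in both hulls
once `z` is dropped from its own side, and it still avoids the hull of the common part. Repeating
gives disjoint `A ⊆ P₁`, `B ⊆ P₂` with intersecting hulls.

Next, `conv A ∩ conv B ≠ ∅` iff `0 ∈ conv ((A × {1}) ∪ (-B × {-1}))` in `E × 𝕜`, so Carathéodory's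
theorem in dimension `d + 1` shrinks `A` and `B` to at most `d + 2` points in total. General
position forces `|P₁ ∪ P₂| ≥ d + 2` (an affinely independent union would give
`conv P₁ ∩ conv P₂ = conv (P₁ ∩ P₂)`), so the two parts can be padded with further points of
`P₁ ∪ P₂` to exactly `d + 2` points.
-/

open Finset

theorem Wbtw.wbtw_or_wbtw_of_wbtw {R V P : Type*} [Field R] [LinearOrder R]
    [IsStrictOrderedRing R] [AddCommGroup V] [Module R V] [AddTorsor V P] {z x a b : P}
    (ha : Wbtw R z x a) (hb : Wbtw R z x b) (hxz : x ≠ z) :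
    Wbtw R z a b ∨ Wbtw R z b a :=
  wbtw_total_of_sameRay_vsub_left <| ha.sameRay_vsub_left.symm.trans hb.sameRay_vsub_left
    fun h => absurd (vsub_eq_zero_iff_eq.1 h) hxz

variable {𝕜 E : Type*} [Field 𝕜] [AddCommGroup E] [Module 𝕜 E]

section CommonPoints

variable [LinearOrder 𝕜] [IsStrictOrderedRing 𝕜] {s t : Set E} {z x : E}

theorem exists_wbtw_of_mem_convexHull (hz : z ∈ s) (hx : x ∈ convexHull 𝕜 s) (hxz : x ≠ z) :
    ∃ a ∈ convexHull 𝕜 (s \ {z}), Wbtw 𝕜 z x a := by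
  have hne : (s \ {z}).Nonempty := by
    by_contra h
    rw [Set.not_nonempty_iff_eq_empty, Set.sdiff_eq_empty] at h
    exact hxz (by simpa using convexHull_mono h hx)
  rw [← Set.insert_sdiff_self_of_mem hz, convexHull_insert hne, mem_convexJoin] at hx
  obtain ⟨z', rfl, a, ha, hxa⟩ := hx
  exact ⟨a, ha, mem_segment_iff_wbtw.1 hxa⟩

theorem mem_convexHull_diff_of_wbtw {a b : E} (hzs : z ∈ s) (hzt : z ∈ t)
    (ha : a ∈ convexHull 𝕜 s) (hb : b ∈ convexHull 𝕜 (t \ {z})) (hba : Wbtw 𝕜 z b a)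
    (hxb : Wbtw 𝕜 z x b) (hx : x ∉ convexHull 𝕜 (s ∩ t)) :
    b ∈ (convexHull 𝕜 s ∩ convexHull 𝕜 (t \ {z})) \ convexHull 𝕜 (s ∩ (t \ {z})) := by
  refine ⟨⟨(convex_convexHull 𝕜 s).segment_subset (subset_convexHull 𝕜 s hzs) ha
    hba.mem_segment, hb⟩, fun hb' => hx ?_⟩
  have hzst : z ∈ convexHull 𝕜 (s ∩ t) := subset_convexHull 𝕜 _ ⟨hzs, hzt⟩
  have hbst : b ∈ convexHull 𝕜 (s ∩ t) :=
    convexHull_mono (Set.inter_subset_inter_right s Set.sdiff_subset) hb'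
  exact (convex_convexHull 𝕜 _).segment_subset hzst hbst hxb.mem_segment

theorem exists_mem_convexHull_diff_singleton (hzs : z ∈ s) (hzt : z ∈ t)
    (hx : x ∈ (convexHull 𝕜 s ∩ convexHull 𝕜 t) \ convexHull 𝕜 (s ∩ t)) :
    ∃ y, y ∈ (convexHull 𝕜 (s \ {z}) ∩ convexHull 𝕜 t) \ convexHull 𝕜 (s \ {z} ∩ t) ∨
      y ∈ (convexHull 𝕜 s ∩ convexHull 𝕜 (t \ {z})) \ convexHull 𝕜 (s ∩ (t \ {z})) := by
  obtain ⟨⟨hxs, hxt⟩, hxst⟩ := hx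
  have hxz : x ≠ z := by
    rintro rfl
    exact hxst (subset_convexHull 𝕜 _ ⟨hzs, hzt⟩)
  obtain ⟨a, ha, hxa⟩ := exists_wbtw_of_mem_convexHull hzs hxs hxz
  obtain ⟨b, hb, hxb⟩ := exists_wbtw_of_mem_convexHull hzt hxt hxz
  rcases hxa.wbtw_or_wbtw_of_wbtw hxb hxz with hab | hba
  · have := mem_convexHull_diff_of_wbtw hzt hzs (convexHull_mono Set.sdiff_subset hb) ha hab hxa
      (Set.inter_comm s t ▸ hxst)
    rw [Set.inter_comm, Set.inter_comm t] at this
    exact ⟨a, Or.inl this⟩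
  · exact ⟨b, Or.inr <| mem_convexHull_diff_of_wbtw hzs hzt
      (convexHull_mono Set.sdiff_subset ha) hb hba hxb hxst⟩

theorem exists_disjoint_subsets_of_mem_convexHull_diff [DecidableEq E] {A B : Finset E}
    (hx : x ∈ (convexHull 𝕜 (A : Set E) ∩ convexHull 𝕜 ↑B) \ convexHull 𝕜 ↑(A ∩ B)) :
    ∃ A' ⊆ A, ∃ B' ⊆ B, Disjoint A' B' ∧
      (convexHull 𝕜 (A' : Set E) ∩ convexHull 𝕜 ↑B').Nonempty := by
  induction h : #(A ∩ B) using Nat.strong_induction_on generalizing A B x with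
  | _ n ih =>
  rcases (A ∩ B).eq_empty_or_nonempty with hAB | ⟨z, hz⟩
  · exact ⟨A, subset_rfl, B, subset_rfl, disjoint_iff_inter_eq_empty.2 hAB, x, hx.1⟩
  obtain ⟨hzA, hzB⟩ := mem_inter.1 hz
  rw [coe_inter] at hx
  obtain ⟨y, hy | hy⟩ := exists_mem_convexHull_diff_singleton (mem_coe.2 hzA) (mem_coe.2 hzB) hx
  · obtain ⟨A', hA', B', hB', hdisj, hne⟩ := ih _ (h ▸ erase_inter z A B ▸ card_erase_lt_of_mem hz)
      (A := A.erase z) (x := y) (by push_cast; exact hy) rfl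
    exact ⟨A', hA'.trans (erase_subset z A), B', hB', hdisj, hne⟩
  · obtain ⟨A', hA', B', hB', hdisj, hne⟩ := ih _ (h ▸ inter_erase z A B ▸ card_erase_lt_of_mem hz)
      (B := B.erase z) (x := y) (by push_cast; exact hy) rfl
    exact ⟨A', hA', B', hB'.trans (erase_subset z B), hdisj, hne⟩

end CommonPoints

section Caratheodory

def signedLift (ε : 𝕜) : E →ᵃ[𝕜] E × 𝕜 :=
  ε • ((LinearMap.inl 𝕜 E 𝕜).toAffineMap + AffineMap.const 𝕜 E (0, 1))

@[simp]
theorem signedLift_apply (ε : 𝕜) (a : E) : signedLift ε a = (ε • a, ε) := by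
  simp [signedLift]

theorem signedLift_injective {ε : 𝕜} (hε : ε ≠ 0) : Function.Injective (signedLift (E := E) ε) :=
  fun _ _ h => smul_right_injective E hε (by simpa using congrArg Prod.fst h)

variable [LinearOrder 𝕜] [IsStrictOrderedRing 𝕜]

theorem zero_mem_convexHull_signedLift_iff {s t : Set E} :
    (0 : E × 𝕜) ∈ convexHull 𝕜 (signedLift 1 '' s ∪ signedLift (-1) '' t) ↔
      (convexHull 𝕜 s ∩ convexHull 𝕜 t).Nonempty := by
  constructor
  · intro h0
    rcases s.eq_empty_or_nonempty with rfl | hs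
    · rw [Set.image_empty, Set.empty_union, ← AffineMap.image_convexHull] at h0
      obtain ⟨b, -, hb⟩ := h0
      simpa using congrArg Prod.snd hb
    rcases t.eq_empty_or_nonempty with rfl | ht
    · rw [Set.image_empty, Set.union_empty, ← AffineMap.image_convexHull] at h0
      obtain ⟨a, -, ha⟩ := h0
      simpa using congrArg Prod.snd ha
    rw [convexHull_union (hs.image _) (ht.image _), mem_convexJoin] at h0
    obtain ⟨p, hp, q, hq, α, β, -, -, hαβ, h⟩ := h0
    rw [← AffineMap.image_convexHull] at hp hq
    obtain ⟨⟨a, ha, rfl⟩, ⟨b, hb, rfl⟩⟩ := And.intro hp hq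
    simp only [signedLift_apply, one_smul, neg_smul, Prod.smul_mk, smul_neg, smul_eq_mul, mul_one,
      mul_neg, Prod.mk_add_mk, Prod.mk_eq_zero] at h
    obtain rfl : α = β := by linear_combination h.2
    obtain rfl : a = b := by
      have hα : α ≠ 0 := by rintro rfl; simp at hαβ
      exact smul_right_injective E hα (by linear_combination (norm := module) h.1)
    exact ⟨a, ha, hb⟩
  · rintro ⟨x, hxs, hxt⟩
    have h₁ : signedLift (1 : 𝕜) x ∈ convexHull 𝕜 (signedLift 1 '' s ∪ signedLift (-1) '' t) :=
      convexHull_mono Set.subset_union_left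
        (AffineMap.image_convexHull (signedLift (1 : 𝕜)) s ▸ Set.mem_image_of_mem _ hxs)
    have h₂ : signedLift (-1 : 𝕜) x ∈ convexHull 𝕜 (signedLift 1 '' s ∪ signedLift (-1) '' t) :=
      convexHull_mono Set.subset_union_right
        (AffineMap.image_convexHull (signedLift (-1 : 𝕜)) t ▸ Set.mem_image_of_mem _ hxt)
    convert convex_convexHull 𝕜 _ h₁ h₂ (by norm_num : (0 : 𝕜) ≤ 1 / 2)
      (by norm_num : (0 : 𝕜) ≤ 1 / 2) (by norm_num) using 1
    ext <;> simp

theorem exists_subsets_card_add_card_le_of_convexHull_inter_nonempty [FiniteDimensional 𝕜 E]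
    [DecidableEq E] {A B : Finset E} (h : (convexHull 𝕜 (A : Set E) ∩ convexHull 𝕜 ↑B).Nonempty) :
    ∃ A' ⊆ A, ∃ B' ⊆ B, #A' + #B' ≤ Module.finrank 𝕜 E + 2 ∧
      (convexHull 𝕜 (A' : Set E) ∩ convexHull 𝕜 ↑B').Nonempty := by
  have h0 := zero_mem_convexHull_signedLift_iff.2 h
  rw [convexHull_eq_union] at h0
  simp only [Set.mem_iUnion] at h0
  obtain ⟨T, hTS, hT, h0T⟩ := h0
  let A' := A.filter (signedLift 1 · ∈ T)
  let B' := B.filter (signedLift (-1) · ∈ T)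
  have hT' : (T : Set (E × 𝕜)) ⊆ signedLift 1 '' ↑A' ∪ signedLift (-1) '' ↑B' := by
    intro p hp
    rcases hTS hp with ⟨a, ha, rfl⟩ | ⟨b, hb, rfl⟩
    · exact Or.inl ⟨a, mem_filter.2 ⟨ha, hp⟩, rfl⟩
    · exact Or.inr ⟨b, mem_filter.2 ⟨hb, hp⟩, rfl⟩
  refine ⟨A', filter_subset _ _, B', filter_subset _ _, ?_,
    zero_mem_convexHull_signedLift_iff.1 (convexHull_mono hT' h0T)⟩
  have hdisj : Disjoint (A'.image (signedLift (1 : 𝕜))) (B'.image (signedLift (-1 : 𝕜))) := by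
    simp only [disjoint_left, mem_image, not_exists, not_and]
    rintro _ ⟨a, -, rfl⟩ b - h
    have := congrArg Prod.snd h
    norm_num at this
  have hsub : A'.image (signedLift (1 : 𝕜)) ∪ B'.image (signedLift (-1 : 𝕜)) ⊆ T := by
    simp only [union_subset_iff, image_subset_iff]
    exact ⟨fun a ha => (mem_filter.1 ha).2, fun b hb => (mem_filter.1 hb).2⟩
  calc #A' + #B' = #(A'.image (signedLift (1 : 𝕜)) ∪ B'.image (signedLift (-1 : 𝕜))) := by
        rw [card_union_of_disjoint hdisj,
          card_image_of_injective _ (signedLift_injective one_ne_zero),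
          card_image_of_injective _ (signedLift_injective (neg_ne_zero.2 one_ne_zero))]
    _ ≤ #T := card_le_card hsub
    _ ≤ Module.finrank 𝕜 (E × 𝕜) + 1 := by
        rw [← Fintype.card_coe T]
        exact hT.card_le_finrank_succ.trans (Nat.add_le_add_right (Submodule.finrank_le _) 1)
    _ = Module.finrank 𝕜 E + 2 := by simp [Module.finrank_prod]

end Caratheodory

theorem Finset.exists_disjoint_supersets_card_union_eq {α : Type*} [DecidableEq α]
    {P₁ P₂ R₁ R₂ : Finset α} (h₁ : R₁ ⊆ P₁) (h₂ : R₂ ⊆ P₂) (hR : Disjoint R₁ R₂) {n : ℕ}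
    (hn₁ : #(R₁ ∪ R₂) ≤ n) (hn₂ : n ≤ #(P₁ ∪ P₂)) :
    ∃ Q₁ Q₂, R₁ ⊆ Q₁ ∧ Q₁ ⊆ P₁ ∧ R₂ ⊆ Q₂ ∧ Q₂ ⊆ P₂ ∧ Disjoint Q₁ Q₂ ∧ #(Q₁ ∪ Q₂) = n := by
  have hR₁₂ : R₁ ∪ R₂ ⊆ P₁ ∪ P₂ := union_subset_union h₁ h₂
  obtain ⟨T, hT, hTcard⟩ := exists_subset_card_eq (s := (P₁ ∪ P₂) \ (R₁ ∪ R₂))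
    (n := n - #(R₁ ∪ R₂)) (by rw [card_sdiff_of_subset hR₁₂]; omega)
  refine ⟨R₁ ∪ T.filter (· ∈ P₁), R₂ ∪ T.filter (· ∉ P₁), subset_union_left, ?_,
    subset_union_left, ?_, ?_, ?_⟩
  · grind
  · grind
  · rw [disjoint_left] at hR ⊢
    grind
  · have : R₁ ∪ T.filter (· ∈ P₁) ∪ (R₂ ∪ T.filter (· ∉ P₁)) = (R₁ ∪ R₂) ∪ T := by grind
    rw [this, card_union_of_disjoint
      (disjoint_left.2 fun x hx hxT => (mem_sdiff.1 (hT hxT)).2 hx)]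
    omega

/-- If P₁ ∪ P₂ is in general position in ℝ^d and
conv(P₁) ∩ conv(P₂) strictly contains conv(P₁ ∩ P₂), then there are disjoint
nonempty Q₁ ⊆ P₁, Q₂ ⊆ P₂ with |Q₁ ∪ Q₂| = d+2 and conv(Q₁) ∩ conv(Q₂) ≠ ∅. -/
theorem stmt_1 (d : ℕ) (P₁ P₂ : Finset (Fin d → ℝ))
    (hgen : ∀ s : Finset (Fin d → ℝ), s ⊆ P₁ ∪ P₂ → s.card ≤ d + 1 →
      AffineIndependent ℝ (fun x : s => (x : Fin d → ℝ)))
    (hstrict : convexHull ℝ (↑(P₁ ∩ P₂) : Set (Fin d → ℝ)) ⊂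
      convexHull ℝ (↑P₁ : Set (Fin d → ℝ)) ∩ convexHull ℝ (↑P₂ : Set (Fin d → ℝ))) :
    ∃ Q₁ Q₂ : Finset (Fin d → ℝ), Q₁ ⊆ P₁ ∧ Q₂ ⊆ P₂ ∧ Q₁.Nonempty ∧ Q₂.Nonempty ∧
      Disjoint Q₁ Q₂ ∧ (Q₁ ∪ Q₂).card = d + 2 ∧
      (convexHull ℝ (↑Q₁ : Set (Fin d → ℝ)) ∩
        convexHull ℝ (↑Q₂ : Set (Fin d → ℝ))).Nonempty := by
  classical
  have hcard : d + 2 ≤ #(P₁ ∪ P₂) := by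
    by_contra! h
    exact hstrict.ne (by push_cast; exact (hgen _ subset_rfl (by omega)).convexHull_inter')
  obtain ⟨x, hx, hx'⟩ := Set.exists_of_ssubset hstrict
  obtain ⟨A, hA, B, hB, hAB, hne⟩ := exists_disjoint_subsets_of_mem_convexHull_diff ⟨hx, hx'⟩
  obtain ⟨A', hA', B', hB', hA'B', hne'⟩ :=
    exists_subsets_card_add_card_le_of_convexHull_inter_nonempty hne
  rw [Module.finrank_fin_fun] at hA'B'
  obtain ⟨Q₁, Q₂, hAQ, hQ₁, hBQ, hQ₂, hQ, hQcard⟩ :=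
    exists_disjoint_supersets_card_union_eq (hA'.trans hA) (hB'.trans hB) (hAB.mono hA' hB')
      ((card_union_le A' B').trans hA'B') hcard
  have hQne : (convexHull ℝ (Q₁ : Set (Fin d → ℝ)) ∩ convexHull ℝ ↑Q₂).Nonempty :=
    hne'.mono (Set.inter_subset_inter (convexHull_mono hAQ) (convexHull_mono hBQ))
  refine ⟨Q₁, Q₂, hQ₁, hQ₂, ?_, ?_, hQ, hQcard, hQne⟩
  · simpa using hQne.mono Set.inter_subset_left
  · simpa using hQne.mono Set.inter_subset_right
end

section
/- Let A and B be disjoint finite point sets on the moment curve γ_d(t) = (t, t^2, ..., t^d) in R^d with |A ∪ B| = d+2. Order the points of A ∪ B as p_1, ..., p_{d+2} by their parameter values on γ_d, with p_1 ∈ A. Then conv(A) ∩ conv(B) ≠ ∅ if and only if A and B interlace, i.e., p_i ∈ A for all odd i and p_i ∈ B for all even i. -/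
/-!
Points `γ(t₀), …, γ(t_{d+1})` of the moment curve satisfy the affine dependence with coefficients
`μ` exactly when `∑ μᵢ tᵢ ^ k = 0` for all `k ≤ d`. By the Vandermonde determinant these
dependences form a line, spanned by the Lagrange nodal weights `λᵢ = ∏_{j ≠ i} (tᵢ - tⱼ)⁻¹`:
`∑ λᵢ p(tᵢ)` is the coefficient of degree `d + 1` of the interpolant of `p`, which vanishes when
`deg p ≤ d`. For increasing `tᵢ` the sign of `λᵢ` is `(-1) ^ (d + 1 - i)`, so it alternates.
The convex hulls of `{γ(tᵢ) | i ∈ S}` and of the remaining points meet iff some nonzero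
dependence is `≥ 0` on `S` and `≤ 0` off `S`; since no `λᵢ` vanishes, this forces `S` to be a sign
class of `λ`, i.e. the set of even indices.
-/

/-- The moment curve in ℝ^d. -/
noncomputable def momentCurve (d : ℕ) (t : ℝ) : Fin d → ℝ := fun i => t ^ ((i : ℕ) + 1)

open Finset Polynomial Lagrange

section RadonPartition

variable {𝕜 E ι : Type*} [Field 𝕜] [LinearOrder 𝕜] [IsStrictOrderedRing 𝕜]
  [AddCommGroup E] [Module 𝕜 E] [Fintype ι]

theorem exists_weights_of_mem_convexHull_image {f : ι → E} {S : Set ι} {x : E}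
    (hx : x ∈ convexHull 𝕜 (f '' S)) :
    ∃ w : ι → 𝕜, (∀ i, 0 ≤ w i) ∧ (∀ i ∉ S, w i = 0) ∧ ∑ i, w i = 1 ∧
      ∑ i, w i • f i = x := by
  classical
  refine convexHull_min (t := {x | ∃ w : ι → 𝕜, (∀ i, 0 ≤ w i) ∧ (∀ i ∉ S, w i = 0) ∧
    ∑ i, w i = 1 ∧ ∑ i, w i • f i = x}) ?_ ?_ hx
  · rintro _ ⟨i, hi, rfl⟩
    exact ⟨Pi.single i 1, Pi.single_nonneg.2 zero_le_one,
      fun j hj => Pi.single_eq_of_ne (by rintro rfl; exact hj hi) 1, by simp, by simp⟩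
  · rintro _ ⟨a, ha0, haS, ha1, rfl⟩ _ ⟨b, hb0, hbS, hb1, rfl⟩ θ η hθ hη hθη
    refine ⟨θ • a + η • b, fun i => ?_, fun i hi => by simp [haS i hi, hbS i hi], ?_, ?_⟩
    · exact add_nonneg (mul_nonneg hθ (ha0 i)) (mul_nonneg hη (hb0 i))
    · simp [sum_add_distrib, ← mul_sum, ha1, hb1, hθη]
    · simp [add_smul, mul_smul, sum_add_distrib, ← smul_sum]

theorem convexHull_image_inter_convexHull_image_compl_nonempty_iff (f : ι → E) (S : Set ι) :
    (convexHull 𝕜 (f '' S) ∩ convexHull 𝕜 (f '' Sᶜ)).Nonempty ↔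
      ∃ μ : ι → 𝕜, (∑ i, μ i = 0 ∧ ∑ i, μ i • f i = 0) ∧ μ ≠ 0 ∧
        (∀ i ∈ S, 0 ≤ μ i) ∧ ∀ i ∉ S, μ i ≤ 0 := by
  classical
  constructor
  · rintro ⟨x, hxS, hxSc⟩
    obtain ⟨a, ha0, haS, ha1, hax⟩ := exists_weights_of_mem_convexHull_image hxS
    obtain ⟨b, hb0, hbS, hb1, hbx⟩ := exists_weights_of_mem_convexHull_image hxSc
    have hbS' : ∀ i ∈ S, b i = 0 := fun i hi => hbS i (not_not_intro hi)
    refine ⟨a - b, ⟨by simp [sum_sub_distrib, ha1, hb1],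
      by simp [sub_smul, sum_sub_distrib, hax, hbx]⟩, fun hab => ?_,
      fun i hi => by simp [hbS' i hi, ha0 i], fun i hi => by simp [haS i hi, hb0 i]⟩
    have ha : a = 0 := funext fun i =>
      if hi : i ∈ S then (sub_eq_zero.mp (congrFun hab i)).trans (hbS' i hi) else haS i hi
    simp [ha] at ha1
  · rintro ⟨μ, ⟨hμ, hμf⟩, hμ0, hS, hSc⟩
    set I := univ.filter (· ∈ S)
    set J := univ.filter (· ∉ S)
    have hIJ : ∑ i ∈ I, μ i + ∑ i ∈ J, μ i = 0 := by rw [sum_filter_add_sum_filter_not, hμ]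
    have hI : 0 < ∑ i ∈ I, μ i := by
      obtain ⟨i, -, hi⟩ := exists_pos_of_sum_zero_of_exists_nonzero μ hμ
        (by simpa [Function.ne_iff] using hμ0)
      refine sum_pos' (fun j hj => hS j (mem_filter.1 hj).2) ⟨i, ?_, hi⟩
      exact mem_filter.2 ⟨mem_univ i, by_contra fun h => (hSc i h).not_gt hi⟩
    have hp : I.centerMass μ f = J.centerMass μ f :=
      centerMass_of_sum_add_sum_eq_zero hIJ (by rw [sum_filter_add_sum_filter_not, hμf])
    refine ⟨I.centerMass μ f, ?_, ?_⟩
    · exact centerMass_mem_convexHull I (fun i hi => hS i (mem_filter.1 hi).2) hI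
        fun i hi => Set.mem_image_of_mem f (mem_filter.1 hi).2
    · rw [hp]
      exact centerMass_mem_convexHull_of_nonpos J (fun i hi => hSc i (mem_filter.1 hi).2)
        (by linarith) fun i hi => Set.mem_image_of_mem f (mem_filter.1 hi).2

end RadonPartition

theorem exists_mem_span_singleton_nonneg_nonpos_iff {K ι : Type*} [Field K] [LinearOrder K]
    [IsStrictOrderedRing K] {w : ι → K} (hw : ∀ i, w i ≠ 0)
    {S : Set ι} {i₀ : ι} (hi₀ : i₀ ∈ S) :
    (∃ μ ∈ K ∙ w, μ ≠ 0 ∧ (∀ i ∈ S, 0 ≤ μ i) ∧ ∀ i ∉ S, μ i ≤ 0) ↔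
      ∀ i, i ∈ S ↔ 0 < w i₀ * w i := by
  simp only [Submodule.mem_span_singleton]
  constructor
  · rintro ⟨_, ⟨c, rfl⟩, hne, hS, hSc⟩ i
    have hc : c ≠ 0 := by rintro rfl; simp at hne
    have hcw : ∀ j, c * w j ≠ 0 := fun j => mul_ne_zero hc (hw j)
    have hmem : ∀ j, j ∈ S ↔ 0 < c * w j := fun j =>
      ⟨fun hj => (hS j hj).lt_of_ne (hcw j).symm, fun hj => by_contra fun h => (hSc j h).not_gt hj⟩
    have hsq : (c * w i₀) * (c * w i) = c ^ 2 * (w i₀ * w i) := by ring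
    rw [hmem, ← mul_pos_iff_of_pos_left ((hmem i₀).1 hi₀), hsq,
      mul_pos_iff_of_pos_left (sq_pos_of_ne_zero hc)]
  · intro h
    refine ⟨w i₀ • w, ⟨w i₀, rfl⟩, fun h0 => hw i₀ ?_, fun i hi => ((h i).1 hi).le,
      fun i hi => not_lt.1 (mt (h i).2 hi)⟩
    simpa using congrFun h0 i₀

namespace Lagrange

theorem sum_nodalWeight_mul_eval_eq_zero {F ι : Type*} [Field F] [DecidableEq ι] {s : Finset ι}
    {v : ι → F} (hvs : Set.InjOn v s) {P : F[X]} (hP : P.degree < ↑(#s - 1)) :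
    ∑ i ∈ s, nodalWeight s v i * P.eval (v i) = 0 := by
  have hPs : P.degree < #s := hP.trans_le (by exact_mod_cast Nat.sub_le _ _)
  rw [← coeff_eq_zero_of_degree_lt hP, coeff_eq_sum hvs hPs]
  refine sum_congr rfl fun i _ => ?_
  rw [nodalWeight, prod_inv_distrib, div_eq_mul_inv, mul_comm]

section AlternatingSigns

variable {K : Type*} [Field K] [LinearOrder K] [IsStrictOrderedRing K]

theorem neg_one_pow_mul_nodalWeight_pos {n : ℕ} {t : Fin n → K} (ht : StrictMono t)
    (i : Fin n) : 0 < (-1) ^ (n - 1 - i : ℕ) * nodalWeight univ t i := by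
  have hsplit : univ.erase i = Iio i ∪ Ioi i := by
    ext j
    simp
  have hdisj : Disjoint (Iio i) (Ioi i) :=
    disjoint_left.2 fun j h1 h2 => (mem_Iio.1 h1).not_gt (mem_Ioi.1 h2)
  have hIoi : ∏ j ∈ Ioi i, (t i - t j)⁻¹ = (-1) ^ (n - 1 - i : ℕ) * ∏ j ∈ Ioi i, (t j - t i)⁻¹ := by
    rw [← Fin.card_Ioi, ← prod_neg]
    exact prod_congr rfl fun j _ => by rw [← inv_neg, neg_sub]
  rw [nodalWeight, hsplit, prod_union hdisj, hIoi, mul_left_comm,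
    ← mul_assoc ((-1 : K) ^ _), ← pow_add, Even.neg_one_pow ⟨_, rfl⟩, one_mul]
  exact mul_pos (prod_pos fun j hj => inv_pos.2 (sub_pos.2 (ht (mem_Iio.1 hj))))
    (prod_pos fun j hj => inv_pos.2 (sub_pos.2 (ht (mem_Ioi.1 hj))))

theorem nodalWeight_zero_mul_nodalWeight_pos_iff {n : ℕ} {t : Fin (n + 1) → K}
    (ht : StrictMono t) (i : Fin (n + 1)) :
    0 < nodalWeight univ t 0 * nodalWeight univ t i ↔ Even (i : ℕ) := by
  have h := mul_pos (neg_one_pow_mul_nodalWeight_pos ht 0) (neg_one_pow_mul_nodalWeight_pos ht i)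
  have hsign : (-1 : K) ^ (n + 1 - 1 - (0 : Fin (n + 1)) : ℕ) * (-1) ^ (n + 1 - 1 - i : ℕ) =
      (-1) ^ (i : ℕ) := by
    rw [← pow_add, Fin.val_zero, show n + 1 - 1 - 0 + (n + 1 - 1 - i) = 2 * (n - i) + i by omega,
      pow_add, pow_mul, neg_one_sq, one_pow, one_mul]
  rw [mul_mul_mul_comm, hsign] at h
  rcases Nat.even_or_odd i with he | ho
  · rw [he.neg_one_pow, one_mul] at h
    exact iff_of_true h he
  · rw [ho.neg_one_pow, neg_one_mul, neg_pos] at h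
    exact iff_of_false h.le.not_gt (Nat.not_even_iff_odd.2 ho)

end AlternatingSigns

end Lagrange

section MomentCurve

variable {F : Type*} [Field F] {n : ℕ} {t : Fin (n + 1) → F}

theorem eq_zero_of_forall_sum_mul_pow_eq_zero_of_apply_zero (ht : Function.Injective t)
    {ν : Fin (n + 1) → F} (hν : ∀ k < n, ∑ i, ν i * t i ^ k = 0) (hν0 : ν 0 = 0) : ν = 0 := by
  have htail : (fun j : Fin n => ν j.succ) = 0 :=
    Matrix.eq_zero_of_forall_pow_sum_mul_pow_eq_zero (ht.comp (Fin.succ_injective n)) fun k => by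
      simpa [Fin.sum_univ_succ, hν0] using hν k k.isLt
  funext i
  cases i using Fin.cases with
  | zero => exact hν0
  | succ j => exact congrFun htail j

theorem forall_sum_mul_pow_eq_zero_iff_mem_span_nodalWeight (ht : Function.Injective t)
    (μ : Fin (n + 1) → F) :
    (∀ k < n, ∑ i, μ i * t i ^ k = 0) ↔ μ ∈ F ∙ nodalWeight univ t := by
  have hw : ∀ k < n, ∑ i, nodalWeight univ t i * t i ^ k = 0 := fun k hk => by
    simpa using sum_nodalWeight_mul_eval_eq_zero ht.injOn (P := X ^ k)
      (by simpa using hk)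
  rw [Submodule.mem_span_singleton]
  constructor
  · intro hμ
    set c := μ 0 / nodalWeight univ t 0
    refine ⟨c, (sub_eq_zero.mp (eq_zero_of_forall_sum_mul_pow_eq_zero_of_apply_zero ht
      (fun k hk => ?_) ?_)).symm⟩
    · simp [sub_mul, sum_sub_distrib, mul_assoc, ← mul_sum, hμ k hk, hw k hk]
    · simp [c, div_mul_cancel₀ _ (nodalWeight_ne_zero ht.injOn (mem_univ 0))]
  · rintro ⟨c, rfl⟩ k hk
    simp [mul_assoc, ← mul_sum, hw k hk]

end MomentCurve

theorem sum_smul_momentCurve_eq_zero_iff {ι : Type*} [Fintype ι] (d : ℕ) (t μ : ι → ℝ) :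
    (∑ i, μ i = 0 ∧ ∑ i, μ i • momentCurve d (t i) = 0) ↔
      ∀ k < d + 1, ∑ i, μ i * t i ^ k = 0 := by
  constructor
  · rintro ⟨h1, hγ⟩ (_ | m) hk
    · simpa using h1
    · simpa [momentCurve] using congrFun hγ ⟨m, by omega⟩
  · intro h
    exact ⟨by simpa using h 0 (by omega),
      funext fun m => by simpa [momentCurve] using h (m + 1) (by omega)⟩

/-- For d+2 points on the moment curve split into two disjoint
parts A (containing the first point) and B, the convex hulls of A and B intersect
iff A and B interlace along the curve (A takes the odd positions, B the even ones,
in 1-based counting). -/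
theorem stmt_2 (d : ℕ) (t : Fin (d + 2) → ℝ) (ht : StrictMono t)
    (S : Set (Fin (d + 2))) (h0 : (0 : Fin (d + 2)) ∈ S)
    (A B : Set (Fin d → ℝ))
    (hA : A = (fun i => momentCurve d (t i)) '' S)
    (hB : B = (fun i => momentCurve d (t i)) '' Sᶜ) :
    (convexHull ℝ A ∩ convexHull ℝ B).Nonempty ↔
      (∀ i : Fin (d + 2), i ∈ S ↔ Even (i : ℕ)) := by
  subst hA hB
  rw [convexHull_image_inter_convexHull_image_compl_nonempty_iff]
  simp_rw [sum_smul_momentCurve_eq_zero_iff,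
    forall_sum_mul_pow_eq_zero_iff_mem_span_nodalWeight ht.injective]
  rw [exists_mem_span_singleton_nonneg_nonpos_iff
    (fun i => nodalWeight_ne_zero ht.injective.injOn (mem_univ i)) h0]
  simp_rw [nodalWeight_zero_mul_nodalWeight_pos_iff ht]
end

section
/- Let k ≤ d+1 be positive integers and let H be a k-uniform hypergraph with a total order ≺ on its vertex set. If H is (d+2)-interlacing with respect to ≺, then for every injective map φ from V(H) to the moment curve γ_d that respects the order ≺, there exist hyperedges e_1, e_2 of H such that conv(φ(e_1)) ∩ conv(φ(e_2)) strictly contains conv(φ(e_1) ∩ φ(e_2)). -/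
/-- A hypergraph (given by its edge set `E`) on a linearly ordered vertex type is
`l`-interlacing if there are two distinct hyperedges `e₁ ≠ e₂` and vertices
`v 0 ≺ v 1 ≺ ⋯ ≺ v (l-1)` alternating between `e₁` (1-based odd positions)
and `e₂` (1-based even positions). -/
def IsInterlacing {V : Type*} [LinearOrder V] (E : Set (Finset V)) (l : ℕ) : Prop :=
  ∃ e₁ ∈ E, ∃ e₂ ∈ E, e₁ ≠ e₂ ∧ ∃ v : Fin l → V, StrictMono v ∧
    ∀ i : Fin l, (Even (i : ℕ) → v i ∈ e₁) ∧ (¬ Even (i : ℕ) → v i ∈ e₂)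

/-!
Write the `d + 2` interlacing vertices as `t₀ < t₁ < ⋯ < t_{d+1}` on the curve. The Lagrange
weights `1 / ∏_{j ≠ i} (tᵢ - tⱼ)` alternate in sign and annihilate `1, t, …, t^d`, so they give
a point `p` in the hull of the even-indexed points (which lie in `e₁`) and in the hull of the
odd-indexed ones (which lie in `e₂`): a Radon partition.

At most `d + 1` distinct points of the moment curve are affinely independent (Vandermonde), so
the simplices spanned by subsets of one edge meet exactly in the simplex of their common vertices.
If `p` were in the hull of `e₁ ∩ e₂`, this applied inside `e₂` puts `p` in the hull of the
odd-indexed points of `e₁`, and then applied inside `e₁` it puts `p` in the hull of the empty set.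
-/

open Finset Polynomial

theorem sum_mul_eval_eq_zero_of_sum_mul_pow_eq_zero {R ι : Type*} [CommSemiring R]
    {s : Finset ι} {w t : ι → R} {d : ℕ} (h : ∀ r ≤ d, ∑ i ∈ s, w i * t i ^ r = 0)
    {P : R[X]} (hP : P.natDegree ≤ d) :
    ∑ i ∈ s, w i * P.eval (t i) = 0 := by
  simp_rw [eval_eq_sum_range' (Nat.lt_succ_of_le hP), mul_sum]
  rw [sum_comm]
  refine sum_eq_zero fun r hr => ?_
  rw [← mul_zero (P.coeff r), ← h r (Nat.lt_succ_iff.mp (mem_range.mp hr)), mul_sum]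
  exact sum_congr rfl fun i _ => by ring

theorem eq_zero_of_sum_mul_pow_eq_zero {F ι : Type*} [Field F] [DecidableEq ι] {s : Finset ι}
    {w t : ι → F} {d : ℕ} (ht : Set.InjOn t s) (hs : #s ≤ d + 1)
    (h : ∀ r ≤ d, ∑ i ∈ s, w i * t i ^ r = 0) : ∀ i ∈ s, w i = 0 := by
  intro i hi
  have hbasis := sum_mul_eval_eq_zero_of_sum_mul_pow_eq_zero h
    (P := Lagrange.basis s t i) (by rw [Lagrange.natDegree_basis ht hi]; omega)
  rwa [sum_eq_single_of_mem i hi fun j hj hji => by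
    rw [Lagrange.eval_basis_of_ne hji.symm hj, mul_zero], Lagrange.eval_basis_self ht hi,
    mul_one] at hbasis

/-- The left-hand side is the coefficient of `X ^ (#s - 1)` in the interpolant of `X ^ r`. -/
theorem sum_pow_div_prod_sub_eq_zero {F ι : Type*} [Field F] [DecidableEq ι] {s : Finset ι}
    {t : ι → F} (ht : Set.InjOn t s) {r : ℕ} (hr : r + 1 < #s) :
    ∑ i ∈ s, t i ^ r / ∏ j ∈ s.erase i, (t i - t j) = 0 := by
  have := Lagrange.coeff_eq_sum ht (P := X ^ r) (by rw [degree_X_pow]; exact_mod_cast by omega)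
  simp only [eval_pow, eval_X, coeff_X_pow] at this
  rw [← this, if_neg (by omega)]

theorem AffineIndependent.convexHull_image_inter {R E ι : Type*} [Field R] [LinearOrder R]
    [IsStrictOrderedRing R] [AddCommGroup E] [Module R E] [Finite ι] {p : ι → E}
    (hp : AffineIndependent R p) (s₁ s₂ : Set ι) :
    convexHull R (p '' (s₁ ∩ s₂)) = convexHull R (p '' s₁) ∩ convexHull R (p '' s₂) := by
  classical
  have hrange : AffineIndependent R ((↑) : (Set.toFinite (Set.range p)).toFinset → E) :=
    hp.range.mono (by simp)
  have h := hrange.convexHull_inter (t₁ := (Set.toFinite (p '' s₁)).toFinset)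
    (t₂ := (Set.toFinite (p '' s₂)).toFinset) (by simp) (by simp)
  rwa [Set.Finite.coe_toFinset, Set.Finite.coe_toFinset, ← Set.image_inter hp.injective] at h

section MomentCurve

variable {d : ℕ} {ι : Type*}

theorem sum_smul_momentCurve_apply (s : Finset ι) (w t : ι → ℝ) (j : Fin d) :
    (∑ i ∈ s, w i • momentCurve d (t i)) j = ∑ i ∈ s, w i * t i ^ ((j : ℕ) + 1) := by
  simp [Finset.sum_apply, momentCurve]

theorem affineIndependent_momentCurve [Fintype ι] {t : ι → ℝ} (ht : Function.Injective t)
    (hcard : Fintype.card ι ≤ d + 1) : AffineIndependent ℝ (fun i => momentCurve d (t i)) := by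
  classical
  rw [affineIndependent_iff]
  intro s w hw₀ hw₁
  refine eq_zero_of_sum_mul_pow_eq_zero ht.injOn ((card_le_univ s).trans hcard) ?_
  rintro (_ | j) hj
  · simpa using hw₀
  · simpa only [sum_smul_momentCurve_apply, Pi.zero_apply] using congrFun hw₁ ⟨j, hj⟩

theorem convexHull_momentCurve_image_inter {T : Finset ℝ} (hT : #T ≤ d + 1) {A B : Set ℝ}
    (hA : A ⊆ T) (hB : B ⊆ T) :
    convexHull ℝ (momentCurve d '' (A ∩ B)) =
      convexHull ℝ (momentCurve d '' A) ∩ convexHull ℝ (momentCurve d '' B) := by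
  have h := (affineIndependent_momentCurve (t := ((↑) : T → ℝ)) Subtype.val_injective
    (by simpa using hT)).convexHull_image_inter (Subtype.val ⁻¹' A) (Subtype.val ⁻¹' B)
  have hval {C : Set ℝ} (hC : C ⊆ T) : ((↑) : T → ℝ) '' (Subtype.val ⁻¹' C) = C :=
    Set.image_preimage_eq_of_subset (by simpa using hC)
  simpa only [← Set.preimage_inter, ← Set.image_image (momentCurve d) Subtype.val, hval hA,
    hval hB, hval (Set.inter_subset_left.trans hA)] using h

theorem neg_one_pow_mul_prod_sub_pos {K : Type*} [Field K] [LinearOrder K]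
    [IsStrictOrderedRing K] {n : ℕ} {t : Fin n → K} (ht : StrictMono t) (i : Fin n) :
    0 < (-1) ^ (n - 1 - i) * ∏ j ∈ univ.erase i, (t i - t j) := by
  have hlt : (univ.erase i).filter (· < i) = Iio i := by
    ext j; simpa using ne_of_lt
  have hgt : (univ.erase i).filter (¬ · < i) = Ioi i := by
    ext j
    simp only [mem_filter, mem_erase, mem_univ, mem_Ioi, and_true, not_lt, Fin.lt_def]
    omega
  rw [← prod_filter_mul_prod_filter_not (univ.erase i) (· < i), hlt, hgt]
  have hIoi : ∏ j ∈ Ioi i, (t i - t j) = (-1) ^ (n - 1 - i) * ∏ j ∈ Ioi i, (t j - t i) := by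
    rw [← Fin.card_Ioi, ← prod_neg]
    exact prod_congr rfl fun j _ => (neg_sub _ _).symm
  rw [hIoi, mul_left_comm, ← mul_assoc ((-1 : K) ^ (n - 1 - (i : ℕ))), ← pow_add,
    Even.neg_one_pow ⟨_, rfl⟩, one_mul]
  exact mul_pos (prod_pos fun j hj => sub_pos.2 (ht (mem_Iio.1 hj)))
    (prod_pos fun j hj => sub_pos.2 (ht (mem_Ioi.1 hj)))

theorem exists_pos_alternating_moments_eq_zero {t : Fin (d + 2) → ℝ} (ht : StrictMono t) :
    ∃ μ : Fin (d + 2) → ℝ, (∀ i, 0 < μ i) ∧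
      ∀ r ≤ d, ∑ i : Fin (d + 2), (-1) ^ (i : ℕ) * (μ i * t i ^ r) = 0 := by
  refine ⟨fun i => ((-1) ^ (d + 2 - 1 - i) * ∏ j ∈ univ.erase i, (t i - t j))⁻¹,
    fun i => inv_pos.2 (neg_one_pow_mul_prod_sub_pos ht i), fun r hr => ?_⟩
  have hsign (i : Fin (d + 2)) :
      (-1 : ℝ) ^ (i : ℕ) * ((-1) ^ (d + 2 - 1 - i))⁻¹ = (-1) ^ (d + 1) := by
    rw [← inv_pow, inv_neg_one, ← pow_add]
    congr 1
    omega
  rw [← mul_zero ((-1 : ℝ) ^ (d + 1)),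
    ← sum_pow_div_prod_sub_eq_zero (r := r) ht.injective.injOn
      (by rw [card_univ, Fintype.card_fin]; omega), mul_sum]
  refine sum_congr rfl fun i _ => ?_
  rw [← hsign i]
  field_simp

theorem sum_filter_even_eq_sum_filter_odd {R : Type*} [CommRing R] {n : ℕ} {f : Fin n → R}
    (h : ∑ i : Fin n, (-1) ^ (i : ℕ) * f i = 0) :
    ∑ i ∈ univ.filter (fun i : Fin n => Even (i : ℕ)), f i =
      ∑ i ∈ univ.filter (fun i : Fin n => ¬Even (i : ℕ)), f i := by
  rw [← sum_filter_add_sum_filter_not univ (fun i : Fin n => Even (i : ℕ))] at h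
  have heven : ∑ i ∈ univ.filter (fun i : Fin n => Even (i : ℕ)), (-1) ^ (i : ℕ) * f i =
      ∑ i ∈ univ.filter (fun i : Fin n => Even (i : ℕ)), f i :=
    sum_congr rfl fun i hi => by rw [(mem_filter.1 hi).2.neg_one_pow, one_mul]
  have hodd : ∑ i ∈ univ.filter (fun i : Fin n => ¬Even (i : ℕ)), (-1) ^ (i : ℕ) * f i =
      -∑ i ∈ univ.filter (fun i : Fin n => ¬Even (i : ℕ)), f i := by
    rw [← sum_neg_distrib]
    exact sum_congr rfl fun i hi => by
      rw [(Nat.not_even_iff_odd.1 (mem_filter.1 hi).2).neg_one_pow, neg_one_mul]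
  rw [heven, hodd] at h
  linear_combination h

theorem momentCurve_radon {t : Fin (d + 2) → ℝ} (ht : StrictMono t) :
    (convexHull ℝ (momentCurve d '' (t '' {i | Even (i : ℕ)})) ∩
      convexHull ℝ (momentCurve d '' (t '' {i | ¬Even (i : ℕ)}))).Nonempty := by
  obtain ⟨μ, hμ, hrel⟩ := exists_pos_alternating_moments_eq_zero ht
  set evens := univ.filter (fun i : Fin (d + 2) => Even (i : ℕ))
  set odds := univ.filter (fun i : Fin (d + 2) => ¬Even (i : ℕ))
  have hsplit (r : ℕ) (hr : r ≤ d) : ∑ i ∈ evens, μ i * t i ^ r = ∑ i ∈ odds, μ i * t i ^ r :=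
    sum_filter_even_eq_sum_filter_odd (hrel r hr)
  have hweight : ∑ i ∈ evens, μ i = ∑ i ∈ odds, μ i := by
    simpa using hsplit 0 d.zero_le
  have hmoment :
      ∑ i ∈ evens, μ i • momentCurve d (t i) = ∑ i ∈ odds, μ i • momentCurve d (t i) :=
    funext fun j => by simpa only [sum_smul_momentCurve_apply] using hsplit (j + 1) j.2
  have hpos : 0 < ∑ i ∈ evens, μ i := sum_pos (fun i _ => hμ i) ⟨0, by simp [evens]⟩
  refine ⟨evens.centerMass μ (fun i => momentCurve d (t i)),
    centerMass_mem_convexHull _ (fun i _ => (hμ i).le) hpos fun i hi => ?_, ?_⟩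
  · exact Set.mem_image_of_mem _ (Set.mem_image_of_mem _ (by simpa [evens] using hi))
  · rw [centerMass, hweight, hmoment]
    exact centerMass_mem_convexHull _ (fun i _ => (hμ i).le) (hweight ▸ hpos) fun i hi =>
      Set.mem_image_of_mem _ (Set.mem_image_of_mem _ (by simpa [odds] using hi))

theorem notMem_convexHull_momentCurve_inter {S₁ S₂ : Finset ℝ} (h₁ : #S₁ ≤ d + 1)
    (h₂ : #S₂ ≤ d + 1) {A B : Set ℝ} (hA : A ⊆ S₁) (hB : B ⊆ S₂) (hAB : Disjoint A B)
    {p : Fin d → ℝ} (hpA : p ∈ convexHull ℝ (momentCurve d '' A))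
    (hpB : p ∈ convexHull ℝ (momentCurve d '' B)) :
    p ∉ convexHull ℝ (momentCurve d '' (S₁ ∩ S₂)) := by
  intro hp
  have hpB' := (convexHull_momentCurve_image_inter h₂ Set.inter_subset_right hB).ge ⟨hp, hpB⟩
  have hpAB := (convexHull_momentCurve_image_inter h₁
    (Set.inter_subset_left.trans Set.inter_subset_left) hA).ge ⟨hpB', hpA⟩
  rwa [Set.inter_assoc, hAB.symm.inter_eq, Set.inter_empty, Set.image_empty,
    convexHull_empty] at hpAB

end MomentCurve

theorem stmt_4_general {V : Type*} [LinearOrder V] (d k : ℕ) (hkd : k ≤ d + 1)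
    (E : Set (Finset V)) (hunif : ∀ e ∈ E, e.card = k)
    (hinter : IsInterlacing E (d + 2))
    (φ : V → ℝ) (hφ : StrictMono φ) :
    ∃ e₁ ∈ E, ∃ e₂ ∈ E,
      convexHull ℝ ((fun v => momentCurve d (φ v)) '' ((e₁ : Set V) ∩ (e₂ : Set V))) ⊂
        convexHull ℝ ((fun v => momentCurve d (φ v)) '' (e₁ : Set V)) ∩
          convexHull ℝ ((fun v => momentCurve d (φ v)) '' (e₂ : Set V)) := by
  obtain ⟨e₁, he₁, e₂, he₂, -, w, hw, halt⟩ := hinter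
  refine ⟨e₁, he₁, e₂, he₂, ?_⟩
  have ht : StrictMono (φ ∘ w) := hφ.comp hw
  obtain ⟨p, hp_even, hp_odd⟩ := momentCurve_radon ht
  have hcard {e : Finset V} (he : e ∈ E) : #(e.image φ) ≤ d + 1 :=
    card_image_le.trans (hunif e he ▸ hkd)
  have heven : φ ∘ w '' {i | Even (i : ℕ)} ⊆ ↑(e₁.image φ) := by
    rintro _ ⟨i, hi, rfl⟩
    exact mem_image_of_mem φ ((halt i).1 hi)
  have hodd : φ ∘ w '' {i | ¬Even (i : ℕ)} ⊆ ↑(e₂.image φ) := by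
    rintro _ ⟨i, hi, rfl⟩
    exact mem_image_of_mem φ ((halt i).2 hi)
  have hdisj : Disjoint (φ ∘ w '' {i | Even (i : ℕ)}) (φ ∘ w '' {i | ¬Even (i : ℕ)}) :=
    (Set.disjoint_image_iff ht.injective).2 (Set.disjoint_left.2 fun _ h h' => h' h)
  simp only [← Set.image_image (momentCurve d) φ]
  refine (Set.ssubset_iff_of_subset (Set.subset_inter
    (convexHull_mono (Set.image_mono (Set.image_mono Set.inter_subset_left)))
    (convexHull_mono (Set.image_mono (Set.image_mono Set.inter_subset_right))))).2
    ⟨p, ⟨convexHull_mono (Set.image_mono (heven.trans coe_image.subset)) hp_even,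
      convexHull_mono (Set.image_mono (hodd.trans coe_image.subset)) hp_odd⟩, fun hp => ?_⟩
  refine notMem_convexHull_momentCurve_inter (hcard he₁) (hcard he₂) heven hodd hdisj hp_even
    hp_odd (convexHull_mono (Set.image_mono ?_) hp)
  simpa only [coe_image] using Set.image_inter_subset φ e₁ e₂

/-- If a k-uniform hypergraph (1 ≤ k ≤ d+1) is (d+2)-interlacing with
respect to the vertex order, then for every order-respecting placement of its vertices
on the moment curve γ_d there are hyperedges whose convex hulls intersect in strictly
more than the convex hull of their common vertices. -/
theorem stmt_4 {V : Type*} [LinearOrder V] (d k : ℕ) (hk : 1 ≤ k) (hkd : k ≤ d + 1)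
    (E : Set (Finset V)) (hunif : ∀ e ∈ E, e.card = k)
    (hinter : IsInterlacing E (d + 2))
    (φ : V → ℝ) (hφ : StrictMono φ) :
    ∃ e₁ ∈ E, ∃ e₂ ∈ E,
      convexHull ℝ ((fun v => momentCurve d (φ v)) '' ((e₁ : Set V) ∩ (e₂ : Set V))) ⊂
        convexHull ℝ ((fun v => momentCurve d (φ v)) '' (e₁ : Set V)) ∩
          convexHull ℝ ((fun v => momentCurve d (φ v)) '' (e₂ : Set V)) :=
  stmt_4_general d k hkd E hunif hinter φ hφ
end

section
/- For every k ≥ 3 and m ≥ 2, the hypergraph H^{k,m} is not m-colorable: for every coloring of its vertices with m colors, some hyperedge is monochromatic. -/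
/-!
Induction on `m`, with `m + 1` colors on the tree of level `m`. If some non-leaf vertex has
children avoiding one of the colors, the copy of the previous hypergraph on those children is
colored with one color fewer and the induction hypothesis applies. Otherwise every non-leaf
vertex has a child of the root's color, and following such children from the root gives a
monochromatic maximal chain.
-/

/-- Vertex types of the recursively defined hypergraphs `H^{k,m}`:
`HVert k 0 = Fin k` and `HVert k (m+1)` is the vertex set of the full b-ary tree of
depth `k-1` whose branching at every non-leaf vertex is indexed by `HVert k m`.
The hypergraph `H^{k,m}` from the paper lives on `HVert k (m-1)`. -/
@[reducible] def HVert (k : ℕ) : ℕ → Type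
  | 0 => Fin k
  | m + 1 => {l : List (HVert k m) // l.length < k}

instance HVertDecEq (k m : ℕ) : DecidableEq (HVert k m) := by
  induction m with
  | zero => exact fun a b => inferInstanceAs (Decidable (a = b))
  | succ m ih => exact fun a b => by letI := ih; exact inferInstanceAs (Decidable (a = b))

/-- The hyperedges of `H^{k,m}` at level `m`: at level 0 the single hyperedge `Fin k`;
at level `m+1`, the maximal chains of the tree together with, for each non-leaf vertex
`l`, the images of the hyperedges of the level-`m` hypergraph placed on the children
of `l`. -/
def HEdge (k : ℕ) : (m : ℕ) → Finset (HVert k m) → Prop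
  | 0 => fun e => e = Finset.univ
  | m + 1 => fun e =>
      (∃ leaf : HVert k (m + 1), leaf.1.length = k - 1 ∧
        e = (Finset.range (leaf.1.length + 1)).image (fun i =>
          (⟨leaf.1.take i, by
              rw [List.length_take]; exact lt_of_le_of_lt (min_le_right _ _) leaf.2⟩ :
            HVert k (m + 1)))) ∨
      (∃ l : List (HVert k m), ∃ h : l.length + 1 < k, ∃ e' : Finset (HVert k m),
        HEdge k m e' ∧
        e = e'.image (fun w => (⟨l ++ [w], by simpa using h⟩ : HVert k (m + 1))))

theorem List.exists_length_eq_forall_take_of_forall_exists_append {α : Type*}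
    {p : List α → Prop} (hnil : p []) :
    ∀ n : ℕ, (∀ l : List α, l.length < n → ∃ w, p (l ++ [w])) →
      ∃ l : List α, l.length = n ∧ ∀ i ≤ n, p (l.take i)
  | 0, _ => ⟨[], rfl, fun _ _ => by simpa using hnil⟩
  | n + 1, hext => by
    obtain ⟨l, hlen, hl⟩ := exists_length_eq_forall_take_of_forall_exists_append hnil n
      fun l hl => hext l (by omega)
    obtain ⟨w, hw⟩ := hext l (by omega)
    refine ⟨l ++ [w], by simp [hlen], fun i hi => ?_⟩
    rcases Nat.lt_or_eq_of_le hi with hi | rfl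
    · rw [List.take_append_of_le_length (by omega)]
      exact hl i (by omega)
    · rwa [List.take_of_length_le (by simp [hlen])]

section Monochromatic

variable {k m : ℕ}

def ExistsMonochromaticHEdge {α : Type*} (c : HVert k m → α) : Prop :=
  ∃ e : Finset (HVert k m), HEdge k m e ∧ ∃ col, ∀ v ∈ e, c v = col

theorem existsMonochromaticHEdge_of_children_avoid
    (ih : ∀ c' : HVert k m → Fin (m + 1), ExistsMonochromaticHEdge c')
    (c : HVert k (m + 1) → Fin (m + 2)) (l : List (HVert k m)) (h : l.length + 1 < k)
    (i : Fin (m + 2)) (hi : ∀ w : HVert k m, c ⟨l ++ [w], by simpa using h⟩ ≠ i) :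
    ExistsMonochromaticHEdge c := by
  choose c' hc' using fun w => Fin.exists_succAbove_eq (hi w)
  obtain ⟨e', he', col, hcol⟩ := ih c'
  refine ⟨_, Or.inr ⟨l, h, e', he', rfl⟩, i.succAbove col, ?_⟩
  simp only [Finset.mem_image, forall_exists_index, and_imp]
  rintro _ w hw rfl
  rw [← hc', hcol w hw]

theorem existsMonochromaticHEdge_of_children_realize (hk : 0 < k)
    (c : HVert k (m + 1) → Fin (m + 2))
    (hchild : ∀ (l : List (HVert k m)) (h : l.length + 1 < k) (col : Fin (m + 2)),
      ∃ w : HVert k m, c ⟨l ++ [w], by simpa using h⟩ = col) :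
    ExistsMonochromaticHEdge c := by
  set root : HVert k (m + 1) := ⟨[], by simpa using hk⟩
  obtain ⟨l, hlen, hl⟩ :=
    List.exists_length_eq_forall_take_of_forall_exists_append
      (p := fun l => ∀ h : l.length < k, c ⟨l, h⟩ = c root) (fun _ => rfl) (k - 1)
      fun l hl => (hchild l (by omega) (c root)).imp fun _ hw _ => hw
  refine ⟨_, Or.inl ⟨⟨l, by omega⟩, hlen, rfl⟩, c root, ?_⟩
  simp only [Finset.mem_image, Finset.mem_range, forall_exists_index, and_imp]
  rintro _ i hi rfl
  exact hl i (by omega) _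

theorem existsMonochromaticHEdge_of_pos (hk : 0 < k) :
    ∀ c : HVert k m → Fin (m + 1), ExistsMonochromaticHEdge c := by
  induction m with
  | zero => exact fun c => ⟨Finset.univ, rfl, 0, fun v _ => Fin.eq_zero _⟩
  | succ m ih =>
    intro c
    by_cases hchild : ∀ (l : List (HVert k m)) (h : l.length + 1 < k) (col : Fin (m + 2)),
        ∃ w : HVert k m, c ⟨l ++ [w], by simpa using h⟩ = col
    · exact existsMonochromaticHEdge_of_children_realize hk c hchild
    · push Not at hchild
      obtain ⟨l, h, i, hi⟩ := hchild
      exact existsMonochromaticHEdge_of_children_avoid ih c l h i hi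

end Monochromatic

theorem stmt_8_general (k m : ℕ) (hk : 3 ≤ k)
    (c : HVert k (m - 1) → Fin m) :
    ∃ e : Finset (HVert k (m - 1)), HEdge k (m - 1) e ∧
      ∃ col : Fin m, ∀ v ∈ e, c v = col := by
  cases m with
  | zero => exact (c ⟨0, by omega⟩).elim0
  | succ m => exact existsMonochromaticHEdge_of_pos (by omega) c

/-- For every `k ≥ 3` and `m ≥ 2`, the hypergraph `H^{k,m}` is not
`m`-colorable: every `m`-coloring of its vertices yields a monochromatic hyperedge. -/
theorem stmt_8 (k m : ℕ) (hk : 3 ≤ k) (hm : 2 ≤ m)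
    (c : HVert k (m - 1) → Fin m) :
    ∃ e : Finset (HVert k (m - 1)), HEdge k (m - 1) e ∧
      ∃ col : Fin m, ∀ v ∈ e, c v = col :=
  stmt_8_general k m hk c
end

section
/- For every m ≥ 1 and d ≥ 1, there exists a finite linear (d+1)-uniform hypergraph that is not m-colorable. -/
/-!
The points of the combinatorial lines of `[d+1]^ι` form a `(d+1)`-uniform hypergraph. It is linear
because a line is determined by any two of its points: a coordinate is free exactly where they
differ. By Hales–Jewett, for `ι` large enough every `m`-coloring has a monochromatic line.
-/

open Combinatorics Function Finset

namespace Combinatorics.Line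

variable {α ι : Type*}

theorem idxFun_injective : Injective (idxFun : Line α ι → ι → Option α) := by
  rintro ⟨f, _⟩ ⟨g, _⟩ rfl
  rfl

instance [Finite α] [Finite ι] : Finite (Line α ι) :=
  .of_injective _ idxFun_injective

theorem apply_injective (l : Line α ι) : Injective l := by
  intro x y hxy
  obtain ⟨i, hi⟩ := l.proper
  simpa [hi] using congrFun hxy i

theorem idxFun_eq_ite [DecidableEq α] (l : Line α ι) {a b : α} (hab : a ≠ b) (i : ι) :
    l.idxFun i = if l a i = l b i then some (l a i) else none := by
  cases h : l.idxFun i <;> simp [h, hab]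

theorem eq_of_apply_eq_apply {l₁ l₂ : Line α ι} {a₁ b₁ a₂ b₂ : α} (hab : a₁ ≠ b₁)
    (ha : l₁ a₁ = l₂ a₂) (hb : l₁ b₁ = l₂ b₂) : l₁ = l₂ := by
  classical
  have hab₂ : a₂ ≠ b₂ := by
    rintro rfl
    exact hab (l₁.apply_injective (ha.trans hb.symm))
  refine idxFun_injective (funext fun i ↦ ?_)
  rw [idxFun_eq_ite l₁ hab, idxFun_eq_ite l₂ hab₂, ha, hb]

variable [Fintype α]

def points (l : Line α ι) : Finset (ι → α) :=
  univ.map ⟨l, l.apply_injective⟩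

@[simp]
theorem mem_points {l : Line α ι} {x : ι → α} : x ∈ l.points ↔ ∃ a, l a = x := by
  simp [points]

@[simp]
theorem card_points (l : Line α ι) : #l.points = Fintype.card α :=
  card_map _

theorem card_points_inter_le_one [DecidableEq (ι → α)] {l₁ l₂ : Line α ι} (h : l₁ ≠ l₂) :
    #(l₁.points ∩ l₂.points) ≤ 1 := by
  refine card_le_one.2 fun x hx y hy ↦ ?_
  simp only [mem_inter, mem_points] at hx hy
  obtain ⟨⟨a₁, rfl⟩, a₂, ha⟩ := hx
  obtain ⟨⟨b₁, rfl⟩, b₂, hb⟩ := hy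
  by_contra hne
  exact h (eq_of_apply_eq_apply (fun hab ↦ hne (by rw [hab])) ha.symm hb.symm)

end Combinatorics.Line

theorem stmt_10_general (m d : ℕ) :
    ∃ (n : ℕ) (E : Finset (Finset (Fin n))),
      (∀ e ∈ E, e.card = d + 1) ∧
      (∀ e₁ ∈ E, ∀ e₂ ∈ E, e₁ ≠ e₂ → (e₁ ∩ e₂).card ≤ 1) ∧
      ∀ c : Fin n → Fin m, ∃ e ∈ E, ∃ col : Fin m, ∀ v ∈ e, c v = col := by
  classical
  obtain ⟨ι, _, hHJ⟩ := Line.exists_mono_in_high_dimension (Fin (d + 1)) (Fin m)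
  have := Fintype.ofFinite (Line (Fin (d + 1)) ι)
  let e := (Fintype.equivFin (ι → Fin (d + 1))).toEmbedding
  refine ⟨_, univ.image fun l : Line (Fin (d + 1)) ι ↦ l.points.map e, ?_, ?_, ?_⟩
  · simp
  · simp only [mem_image, mem_univ, true_and, forall_exists_index, forall_apply_eq_imp_iff]
    intro l₁ l₂ hne
    rw [← map_inter, card_map]
    exact Line.card_points_inter_le_one (by rintro rfl; exact hne rfl)
  · intro c
    obtain ⟨l, col, hcol⟩ := hHJ (c ∘ e)
    exact ⟨_, mem_image_of_mem _ (mem_univ l), col, by simpa using hcol⟩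

/-- For every `m ≥ 1` and `d ≥ 1` there exists a finite linear
`(d+1)`-uniform hypergraph which is not `m`-colorable. -/
theorem stmt_10 (m d : ℕ) (hm : 1 ≤ m) (hd : 1 ≤ d) :
    ∃ (n : ℕ) (E : Finset (Finset (Fin n))),
      (∀ e ∈ E, e.card = d + 1) ∧
      (∀ e₁ ∈ E, ∀ e₂ ∈ E, e₁ ≠ e₂ → (e₁ ∩ e₂).card ≤ 1) ∧
      ∀ c : Fin n → Fin m, ∃ e ∈ E, ∃ col : Fin m, ∀ v ∈ e, c v = col :=
  stmt_10_general m d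
end

section
/- Let d = 2k-1 with k ≥ 2. The (d+1)-uniform hypergraph L_d = K_1 ∪ K_2 ∪ (M_1 * M_2) is not 2-colorable: for every 2-coloring of its vertex set, some hyperedge is monochromatic. -/
/-- Vertices of the hypergraph `L_d` for `d = 2k-1`: `false` indexes the vertices
`v^i_j ∈ V_i` and `true` the vertices `w^i_j ∈ W_i`, for `i ∈ [d]`, `j ∈ [4k-2]`
(0-based). -/
@[reducible] def LVert (k : ℕ) : Type := Bool × Fin (2 * k - 1) × Fin (4 * k - 2)

/-- The consecutive pair `{v^i_{j}, v^i_{j+1}}` (resp. with `w`'s) of the `i`-th path. -/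
def pairEdge (k : ℕ) (b : Bool) (i : Fin (2 * k - 1)) (j : Fin (4 * k - 3)) :
    Finset (LVert k) :=
  {(b, i, ⟨j.1, by have := j.isLt; omega⟩), (b, i, ⟨j.1 + 1, by have := j.isLt; omega⟩)}

/-- Hyperedges of `K₁` (for `b = false`) resp. `K₂` (for `b = true`): unions, over a
`k`-subset `S` of `[2k-1]`, of one consecutive pair chosen from each path `P_i`
(`i ∈ S`); i.e. the abstract join `P_{i₁} * ⋯ * P_{i_k}`. -/
def IsKEdge (k : ℕ) (b : Bool) (e : Finset (LVert k)) : Prop :=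
  ∃ S : Finset (Fin (2 * k - 1)), S.card = k ∧
    ∃ g : Fin (2 * k - 1) → Fin (4 * k - 3),
      e = S.biUnion fun i => pairEdge k b i (g i)

/-- Hyperedges of `M₁` (b = false) resp. `M₂` (b = true): for some `i`, either the
first `k` odd-indexed vertices `{v^i_1, v^i_3, …, v^i_{2k-1}}` (0-based: even indices
`< 2k-1`) or the last `k` even-indexed vertices `{v^i_{2k}, …, v^i_{4k-2}}`
(0-based: odd indices `≥ 2k-1`). -/
def IsMEdge (k : ℕ) (b : Bool) (f : Finset (LVert k)) : Prop :=
  ∃ i : Fin (2 * k - 1),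
    f = (Finset.univ.filter fun j : Fin (4 * k - 2) =>
          Even j.1 ∧ j.1 < 2 * k - 1).image (fun j => (b, i, j)) ∨
    f = (Finset.univ.filter fun j : Fin (4 * k - 2) =>
          ¬ Even j.1 ∧ 2 * k - 1 ≤ j.1).image (fun j => (b, i, j))

/-- The hyperedges of `L_d = K₁ ∪ K₂ ∪ (M₁ * M₂)`, `d = 2k-1`. -/
def IsLEdge (k : ℕ) (e : Finset (LVert k)) : Prop :=
  IsKEdge k false e ∨ IsKEdge k true e ∨
    ∃ f₁ f₂ : Finset (LVert k), IsMEdge k false f₁ ∧ IsMEdge k true f₂ ∧ e = f₁ ∪ f₂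

/-!
If, for some copy `b` and colour `col`, at least `k` of the `2k-1` paths contain an edge
of colour `col`, then choosing one such edge on `k` of these paths gives a hyperedge of
`K_b` of colour `col`. Otherwise, by pigeonhole, each copy has a path without monochromatic
edges. Its colours alternate, so one of its two `M`-sets (even positions at the start, odd
positions at the end) has colour `false`; the union of these two sets, one per copy, is a
monochromatic hyperedge of `M₁ * M₂`.
-/

open Finset

theorem eq_ite_even_of_succ_ne {N : ℕ} {f : Fin N → Bool}
    (h : ∀ (j : ℕ) (hj : j + 1 < N), f ⟨j + 1, hj⟩ ≠ f ⟨j, by omega⟩) (j : Fin N) :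
    f j = if Even j.1 then f ⟨0, j.pos⟩ else !f ⟨0, j.pos⟩ := by
  obtain ⟨m, hm⟩ := j
  induction m with
  | zero => simp
  | succ m ih =>
    have hstep : f ⟨m + 1, hm⟩ = !f ⟨m, by omega⟩ := Bool.eq_not_iff.mpr (h m hm)
    rw [hstep, ih (by omega)]
    by_cases he : Even m <;> simp [he, Nat.even_add_one]

section Coloring

variable {k : ℕ} (c : LVert k → Bool)

def HasMonoPair (b col : Bool) (i : Fin (2 * k - 1)) : Prop :=
  ∃ j, ∀ v ∈ pairEdge k b i j, c v = col

theorem exists_isKEdge_mono {b col : Bool} [DecidablePred (HasMonoPair c b col)]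
    (h : k ≤ #{i | HasMonoPair c b col i}) :
    ∃ e, IsKEdge k b e ∧ ∀ v ∈ e, c v = col := by
  obtain ⟨S, hS, hcard⟩ := exists_subset_card_eq h
  have hpair : ∀ i, ∃ j, i ∈ S → ∀ v ∈ pairEdge k b i j, c v = col := by
    intro i
    by_cases hi : i ∈ S
    · obtain ⟨j, hj⟩ := (mem_filter.mp (hS hi)).2
      exact ⟨j, fun _ => hj⟩
    · exact ⟨Fin.castLE (by omega) i, fun h => absurd h hi⟩
  choose g hg using hpair
  refine ⟨S.biUnion fun i => pairEdge k b i (g i), ⟨S, hcard, g, rfl⟩, fun v hv => ?_⟩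
  obtain ⟨i, hi, hv⟩ := mem_biUnion.mp hv
  exact hg i hi v hv

theorem exists_forall_not_hasMonoPair {b : Bool} [DecidablePred (HasMonoPair c b false)]
    [DecidablePred (HasMonoPair c b true)]
    (hfalse : #{i | HasMonoPair c b false i} < k) (htrue : #{i | HasMonoPair c b true i} < k) :
    ∃ i, ∀ col, ¬HasMonoPair c b col i := by
  by_contra! hall
  have hcover : univ ⊆ univ.filter (fun i => HasMonoPair c b false i) ∪
      univ.filter (fun i => HasMonoPair c b true i) := by
    intro i _
    obtain ⟨col, hcol⟩ := hall i
    cases col <;> simp [hcol]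
  have := (card_le_card hcover).trans (card_union_le _ _)
  rw [card_univ, Fintype.card_fin] at this
  omega

theorem succ_ne_of_forall_not_hasMonoPair {b : Bool} {i : Fin (2 * k - 1)}
    (hi : ∀ col, ¬HasMonoPair c b col i) (j : ℕ) (hj : j + 1 < 4 * k - 2) :
    c (b, i, ⟨j + 1, hj⟩) ≠ c (b, i, ⟨j, by omega⟩) := by
  intro heq
  apply hi (c (b, i, ⟨j, by omega⟩))
  refine ⟨⟨j, by omega⟩, ?_⟩
  simp [pairEdge, heq]

theorem exists_isMEdge_mono {b : Bool} {i : Fin (2 * k - 1)}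
    (hi : ∀ col, ¬HasMonoPair c b col i) (col : Bool) :
    ∃ f, IsMEdge k b f ∧ ∀ v ∈ f, c v = col := by
  have halt := eq_ite_even_of_succ_ne (f := fun j => c (b, i, j))
    (succ_ne_of_forall_not_hasMonoPair c hi)
  have hk : 0 < 4 * k - 2 := by have := i.pos; omega
  by_cases hcol : c (b, i, ⟨0, hk⟩) = col
  · refine ⟨_, ⟨i, Or.inl rfl⟩, ?_⟩
    simp only [mem_image, mem_filter, mem_univ, true_and]
    rintro _ ⟨j, ⟨hj, -⟩, rfl⟩
    simpa [hj, hcol] using halt j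
  · refine ⟨_, ⟨i, Or.inr rfl⟩, ?_⟩
    simp only [mem_image, mem_filter, mem_univ, true_and]
    rintro _ ⟨j, ⟨hj, -⟩, rfl⟩
    simpa [hj, Bool.eq_not_iff.mpr hcol] using halt j

end Coloring

theorem stmt_11_general (k : ℕ) (c : LVert k → Bool) :
    ∃ e : Finset (LVert k), IsLEdge k e ∧ ∃ col : Bool, ∀ v ∈ e, c v = col := by
  classical
  by_cases hK : ∃ b col, k ≤ #{i | HasMonoPair c b col i}
  · obtain ⟨b, col, h⟩ := hK
    obtain ⟨e, he, hmono⟩ := exists_isKEdge_mono c h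
    exact ⟨e, by cases b; exacts [Or.inl he, Or.inr (Or.inl he)], col, hmono⟩
  · push Not at hK
    obtain ⟨i₀, h₀⟩ := exists_forall_not_hasMonoPair c (hK false false) (hK false true)
    obtain ⟨i₁, h₁⟩ := exists_forall_not_hasMonoPair c (hK true false) (hK true true)
    obtain ⟨f₁, hf₁, hc₁⟩ := exists_isMEdge_mono c h₀ false
    obtain ⟨f₂, hf₂, hc₂⟩ := exists_isMEdge_mono c h₁ false
    refine ⟨f₁ ∪ f₂, Or.inr (Or.inr ⟨f₁, f₂, hf₁, hf₂, rfl⟩), false, ?_⟩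
    simpa only [forall_mem_union] using ⟨hc₁, hc₂⟩

/-- For `d = 2k-1`, `k ≥ 2`, the `(d+1)`-uniform hypergraph `L_d` is not
2-colorable: every 2-coloring has a monochromatic hyperedge. -/
theorem stmt_11 (k : ℕ) (hk : 2 ≤ k) (c : LVert k → Bool) :
    ∃ e : Finset (LVert k), IsLEdge k e ∧ ∃ col : Bool, ∀ v ∈ e, c v = col :=
  stmt_11_general k c
end

section
/- Let d = 2k-1 with k ≥ 2. The hypergraph L_d is 3-colorable: color the vertices of each path V_i (and each W_i) by three colors RED, BLUE, GREEN alternating cyclically in index order; then no hyperedge of L_d is monochromatic. -/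
def NotMonochromatic {α γ : Type*} (c : α → γ) (e : Finset α) : Prop :=
  ∃ u ∈ e, ∃ v ∈ e, c u ≠ c v

theorem NotMonochromatic.mono {α γ : Type*} {c : α → γ} {e f : Finset α}
    (h : NotMonochromatic c e) (hef : e ⊆ f) : NotMonochromatic c f := by
  obtain ⟨u, hu, v, hv, huv⟩ := h
  exact ⟨u, hef hu, v, hef hv, huv⟩

def pathColor (k : ℕ) (x : LVert k) : ℕ := x.2.2.1 % 3

theorem pathColor_mk (k : ℕ) (b : Bool) (i : Fin (2 * k - 1)) (j : Fin (4 * k - 2)) :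
    pathColor k (b, i, j) = j.1 % 3 := rfl

theorem notMonochromatic_pairEdge (k : ℕ) (b : Bool) (i : Fin (2 * k - 1))
    (j : Fin (4 * k - 3)) : NotMonochromatic (pathColor k) (pairEdge k b i j) :=
  ⟨(b, i, ⟨j.1, by omega⟩), by simp [pairEdge], (b, i, ⟨j.1 + 1, by omega⟩), by simp [pairEdge],
    by simp only [pathColor_mk]; omega⟩

theorem IsKEdge.notMonochromatic {k : ℕ} (hk : 0 < k) {b : Bool} {e : Finset (LVert k)}
    (he : IsKEdge k b e) : NotMonochromatic (pathColor k) e := by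
  obtain ⟨S, hS, g, rfl⟩ := he
  obtain ⟨i, hi⟩ := Finset.card_pos.mp (hS ▸ hk)
  exact (notMonochromatic_pairEdge k b i (g i)).mono
    (Finset.subset_biUnion_of_mem (fun i => pairEdge k b i (g i)) hi)

theorem IsMEdge.notMonochromatic {k : ℕ} (hk : 2 ≤ k) {b : Bool} {f : Finset (LVert k)}
    (hf : IsMEdge k b f) : NotMonochromatic (pathColor k) f := by
  obtain ⟨i, rfl | rfl⟩ := hf
  · refine ⟨(b, i, ⟨0, by omega⟩), ?_, (b, i, ⟨2, by omega⟩), ?_, by simp [pathColor_mk]⟩ <;>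
      refine Finset.mem_image_of_mem _ (Finset.mem_filter.mpr ⟨Finset.mem_univ _, ?_⟩) <;>
      simp only [Nat.even_iff, true_and] <;> omega
  · refine ⟨(b, i, ⟨2 * k - 1, by omega⟩), ?_, (b, i, ⟨2 * k + 1, by omega⟩), ?_,
      by simp only [pathColor_mk]; omega⟩ <;>
      refine Finset.mem_image_of_mem _ (Finset.mem_filter.mpr ⟨Finset.mem_univ _, ?_⟩) <;>
      simp only [Nat.even_iff] <;> omega

theorem IsLEdge.notMonochromatic {k : ℕ} (hk : 2 ≤ k) {e : Finset (LVert k)}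
    (he : IsLEdge k e) : NotMonochromatic (pathColor k) e := by
  rcases he with hK | hK | ⟨f₁, f₂, hf₁, -, rfl⟩
  · exact hK.notMonochromatic (by omega)
  · exact hK.notMonochromatic (by omega)
  · exact (hf₁.notMonochromatic hk).mono Finset.subset_union_left

/-- For `d = 2k-1`, `k ≥ 2`, the hypergraph `L_d` is 3-colorable; indeed
coloring vertex `v^i_j` (and `w^i_j`) by `j mod 3` (i.e. alternating RED, BLUE, GREEN
along each path in index order) leaves no hyperedge monochromatic. -/
theorem stmt_12 (k : ℕ) (hk : 2 ≤ k) :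
    ∀ e : Finset (LVert k), IsLEdge k e →
      ∃ u ∈ e, ∃ v ∈ e, u.2.2.1 % 3 ≠ v.2.2.1 % 3 :=
  fun _ he => he.notMonochromatic hk
end

section
/- Let ≺ be the total order on the vertices of the hypergraph H(a,b) (on the b-ary tree T(a,b) of depth a-1) given by a DFS order, with a ≥ 3. Then for any two distinct maximal chains A and B of T(a,b), the pattern of A and B with respect to ≺ has the form I^l A^{a-l} B^{a-l} or I^l B^{a-l} A^{a-l} for some 1 ≤ l ≤ a-1; consequently {A, B} is at most (a+1)-interlacing. -/
/-- The vertex set of the full b-ary tree `T(a,b)` of depth `a-1`: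
vertices are addresses, i.e. lists over `Fin b` of length `< a`. -/
def TreeVert (a b : ℕ) : Type := {l : List (Fin b) // l.length < a}

instance (a b : ℕ) : DecidableEq (TreeVert a b) := by
  unfold TreeVert; infer_instance

/-- The maximal chain through a vertex: the set of all its prefixes
(for a leaf, this is the whole root-to-leaf path). -/
def chainOf {a b : ℕ} (m : TreeVert a b) : Finset (TreeVert a b) :=
  (Finset.range (m.1.length + 1)).image fun i =>
    ⟨m.1.take i, by rw [List.length_take]; exact lt_of_le_of_lt (min_le_right _ _) m.2⟩

/-!
Let `l` be the number of common vertices of two distinct root-to-leaf paths `A` and `B`; they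
then branch into children `x_l ∈ A` and `y_l ∈ B`, say `x_l ≺ y_l`. A DFS order lists each path
in increasing depth, and since the descendants of `x_l` form an interval that starts at `x_l`
and misses `y_l`, every private vertex of `A` precedes every private vertex of `B`: the pattern
is `Iˡ A^(a-l) B^(a-l)`. An alternating sequence `w₀ ≺ w₁ ≺ ⋯` drawn from `A ∪ B` has `wᵢ` at
position at least `i` of this word, so `w_l, w_{l+1}, w_{l+2}` lie in the two private blocks,
and two consecutive ones lie in the same block, which is impossible.
-/

theorem List.exists_take_eq_take_iff_lt {α : Type*} {x y : List α} (hxy : x ≠ y) :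
    ∃ l, ∀ k, x.take k = y.take k ↔ k < l := by
  classical
  have hex : ∃ k, x.take k ≠ y.take k := ⟨max x.length y.length, by
    rwa [List.take_of_length_le (le_max_left _ _), List.take_of_length_le (le_max_right _ _)]⟩
  refine ⟨Nat.find hex, fun k => ⟨fun h => ?_, fun h => not_not.1 (Nat.find_min hex h)⟩⟩
  by_contra! hk
  apply Nat.find_spec hex
  simpa only [List.take_take, min_eq_left hk] using congrArg (List.take (Nat.find hex)) h

theorem Fin.val_le_val_apply_of_strictMono {m n : ℕ} {σ : Fin m → Fin n} (hσ : StrictMono σ)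
    (i : Fin m) : (i : ℕ) ≤ σ i := by
  have := Finset.card_le_card_of_injOn σ (s := Finset.Iio i) (t := Finset.Iio (σ i))
    (fun j hj => by simpa using hσ (by simpa using hj)) hσ.injective.injOn
  simpa only [Fin.card_Iio] using this

section Pattern

variable {α : Type*}

/-- `v` spells the word `Cˡ X^(a-l) Y^(n-a)`. -/
def HasPattern {n : ℕ} (v : Fin n → α) (C X Y : Finset α) (l a : ℕ) : Prop :=
  ∀ i : Fin n, ((i : ℕ) < l → v i ∈ C) ∧ (l ≤ (i : ℕ) → (i : ℕ) < a → v i ∈ X) ∧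
    (a ≤ (i : ℕ) → v i ∈ Y)

variable {r : α → α → Prop} [IsStrictOrder α r]

theorem strictMono_of_comp_eq {β γ : Type*} [LinearOrder β] [Preorder γ] {v : β → α}
    {w : γ → α} (hv : ∀ i j, i < j → r (v i) (v j)) (hw : ∀ i j, i < j → r (w i) (w j))
    {σ : γ → β} (hσ : ∀ i, v (σ i) = w i) : StrictMono σ := by
  intro i j hij
  by_contra! hji
  have hwij := hw i j hij
  rw [← hσ i, ← hσ j] at hwij
  rcases hji.lt_or_eq with hlt | heq
  · exact asymm hwij (hv _ _ hlt)
  · exact irrefl _ (heq ▸ hwij)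

theorem not_alternating_of_hasPattern [DecidableEq α] {A B C : Finset α} {n m l a : ℕ}
    {v : Fin n → α}
    (hv : ∀ i j, i < j → r (v i) (v j)) (hrange : ((A ∪ B : Finset α) : Set α) = Set.range v)
    (hpat : HasPattern v C (A \ B) (B \ A) l a) (hm : l + 3 ≤ m) {w : Fin m → α}
    (hw : ∀ i j, i < j → r (w i) (w j)) (hwAB : ∀ i, w i ∈ A ∪ B)
    (halt : ∀ i j : Fin m, (i : ℕ) + 1 = j → (w i ∈ A ∧ w j ∈ B) ∨ (w i ∈ B ∧ w j ∈ A)) :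
    False := by
  have hwv : ∀ i, w i ∈ Set.range v := fun i => hrange ▸ Finset.mem_coe.2 (hwAB i)
  choose σ hσ using hwv
  have hσ_mono := strictMono_of_comp_eq hv hw hσ
  let i₀ : Fin m := ⟨l, by omega⟩
  let i₁ : Fin m := ⟨l + 1, by omega⟩
  let i₂ : Fin m := ⟨l + 2, by omega⟩
  have h₀ : l ≤ (σ i₀ : ℕ) := Fin.val_le_val_apply_of_strictMono hσ_mono i₀
  have h₀₁ : σ i₀ < σ i₁ := hσ_mono (show i₀ < i₁ from Fin.mk_lt_mk.2 (by omega))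
  have h₁₂ : σ i₁ < σ i₂ := hσ_mono (show i₁ < i₂ from Fin.mk_lt_mk.2 (by omega))
  rw [Fin.lt_def] at h₀₁ h₁₂
  by_cases h₁ : (σ i₁ : ℕ) < a
  · have hA : ∀ i, l ≤ (σ i : ℕ) → (σ i : ℕ) < a → w i ∉ B := fun i hl ha =>
      hσ i ▸ (Finset.mem_sdiff.1 ((hpat (σ i)).2.1 hl ha)).2
    rcases halt i₀ i₁ rfl with ⟨-, hB⟩ | ⟨hB, -⟩
    · exact hA i₁ (by omega) h₁ hB
    · exact hA i₀ h₀ (by omega) hB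
  · have hB : ∀ i, a ≤ (σ i : ℕ) → w i ∉ A := fun i ha =>
      hσ i ▸ (Finset.mem_sdiff.1 ((hpat (σ i)).2.2 ha)).2
    rcases halt i₁ i₂ rfl with ⟨hA, -⟩ | ⟨-, hA⟩
    · exact hB i₁ (by omega) hA
    · exact hB i₂ (by omega) hA

theorem alternates_of_even_odd {m : ℕ} {w : Fin m → α} {e₁ e₂ : Finset α}
    (hw : ∀ i : Fin m, (Even (i : ℕ) → w i ∈ e₁) ∧ (¬ Even (i : ℕ) → w i ∈ e₂))
    (i j : Fin m) (hij : (i : ℕ) + 1 = j) : (w i ∈ e₁ ∧ w j ∈ e₂) ∨ (w i ∈ e₂ ∧ w j ∈ e₁) := by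
  by_cases hi : Even (i : ℕ)
  · exact Or.inl ⟨(hw i).1 hi, (hw j).2 (by rw [← hij, Nat.even_add_one]; exact not_not.2 hi)⟩
  · exact Or.inr ⟨(hw i).2 hi, (hw j).1 (by rw [← hij, Nat.even_add_one]; exact hi)⟩

theorem not_interlacing_of_hasPattern [DecidableEq α] {A B : Finset α} {n m l a : ℕ}
    {v : Fin n → α}
    (hv : ∀ i j, i < j → r (v i) (v j)) (hrange : ((A ∪ B : Finset α) : Set α) = Set.range v)
    (hpat : HasPattern v (A ∩ B) (A \ B) (B \ A) l a ∨ HasPattern v (A ∩ B) (B \ A) (A \ B) l a)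
    (hm : l + 3 ≤ m) :
    ¬ ∃ e₁ e₂ : Finset α, e₁ ∈ ({A, B} : Set (Finset α)) ∧ e₂ ∈ ({A, B} : Set (Finset α)) ∧
      e₁ ≠ e₂ ∧ ∃ w : Fin m → α, (∀ i j, i < j → r (w i) (w j)) ∧
        ∀ i : Fin m, (Even (i : ℕ) → w i ∈ e₁) ∧ (¬ Even (i : ℕ) → w i ∈ e₂) := by
  rintro ⟨e₁, e₂, he₁, he₂, hne, w, hw, hwe⟩
  have hmem : ∀ i, w i ∈ A ∪ B := by
    have hsub : ∀ e ∈ ({A, B} : Set (Finset α)), e ⊆ A ∪ B := by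
      rintro e (rfl | rfl)
      exacts [Finset.subset_union_left, Finset.subset_union_right]
    intro i
    by_cases hi : Even (i : ℕ)
    exacts [hsub e₁ he₁ ((hwe i).1 hi), hsub e₂ he₂ ((hwe i).2 hi)]
  have halt : ∀ i j : Fin m, (i : ℕ) + 1 = j → (w i ∈ A ∧ w j ∈ B) ∨ (w i ∈ B ∧ w j ∈ A) := by
    simp only [Set.mem_insert_iff, Set.mem_singleton_iff] at he₁ he₂
    rcases he₁ with rfl | rfl <;> rcases he₂ with rfl | rfl
    · exact absurd rfl hne
    · exact alternates_of_even_odd hwe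
    · exact fun i j hij => (alternates_of_even_odd hwe i j hij).symm
    · exact absurd rfl hne
  rcases hpat with hpat | hpat
  · exact not_alternating_of_hasPattern hv hrange hpat hm hw hmem halt
  · rw [Finset.union_comm] at hrange hmem
    exact not_alternating_of_hasPattern hv hrange hpat hm hw hmem fun i j hij => (halt i j hij).symm

end Pattern

namespace TreeVert

variable {a b : ℕ}

def take (x : TreeVert a b) (k : ℕ) : TreeVert a b :=
  ⟨x.1.take k, lt_of_le_of_lt (List.length_take_le' _ _) x.2⟩

@[simp]
theorem take_val (x : TreeVert a b) (k : ℕ) : (x.take k).1 = x.1.take k := rfl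

theorem mem_chainOf {x y : TreeVert a b} : y ∈ chainOf x ↔ y.1 <+: x.1 := by
  refine ⟨?_, fun h => Finset.mem_image.2 ⟨y.1.length, ?_, ?_⟩⟩
  · intro h
    obtain ⟨i, -, rfl⟩ := Finset.mem_image.1 h
    exact List.take_prefix i x.1
  · exact Finset.mem_range.2 (Nat.lt_succ_of_le h.length_le)
  · exact Subtype.ext (List.prefix_iff_eq_take.1 h).symm

theorem take_mem_chainOf (x : TreeVert a b) (k : ℕ) : x.take k ∈ chainOf x :=
  mem_chainOf.2 (List.take_prefix k x.1)

theorem eq_take_of_mem_chainOf {x y : TreeVert a b} (h : y ∈ chainOf x) :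
    y = x.take y.1.length :=
  Subtype.ext (List.prefix_iff_eq_take.1 (mem_chainOf.1 h))

theorem take_mem_chainOf_iff {x y : TreeVert a b} {k : ℕ} (hk : k ≤ x.1.length) :
    x.take k ∈ chainOf y ↔ x.1.take k = y.1.take k := by
  rw [mem_chainOf, List.prefix_iff_eq_take, take_val, List.length_take, min_eq_left hk]

/-- The vertices of two root-to-leaf paths `x`, `y` meeting in `l` vertices, listed as the
path of `x` followed by the private part of the path of `y`. -/
def mergeChains (x y : TreeVert a b) (l i : ℕ) : TreeVert a b :=
  if i < a then x.take i else y.take (i - (a - l))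

theorem range_mergeChains {x y : TreeVert a b} {l : ℕ}
    (hl : ∀ k, x.1.take k = y.1.take k ↔ k < l) (hla : l ≤ a - 1) :
    Set.range (fun i : Fin (2 * a - l) => mergeChains x y l i) = ↑(chainOf x ∪ chainOf y) := by
  ext z
  simp only [Set.mem_range, Finset.coe_union, Set.mem_union, Finset.mem_coe]
  constructor
  · rintro ⟨i, rfl⟩
    unfold mergeChains
    split_ifs
    exacts [Or.inl (take_mem_chainOf x _), Or.inr (take_mem_chainOf y _)]
  · rintro (hz | hz)
    · refine ⟨⟨z.1.length, by have := z.2; omega⟩, ?_⟩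
      change mergeChains x y l z.1.length = z
      rw [mergeChains, if_pos z.2]
      exact (eq_take_of_mem_chainOf hz).symm
    · by_cases hzl : z.1.length < l
      · refine ⟨⟨z.1.length, by have := z.2; omega⟩, ?_⟩
        change mergeChains x y l z.1.length = z
        rw [mergeChains, if_pos z.2]
        exact Subtype.ext (((hl _).2 hzl).trans (List.prefix_iff_eq_take.1 (mem_chainOf.1 hz)).symm)
      · have hza : ¬ z.1.length + (a - l) < a := by omega
        refine ⟨⟨z.1.length + (a - l), by have := z.2; omega⟩, ?_⟩
        change mergeChains x y l (z.1.length + (a - l)) = z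
        rw [mergeChains, if_neg hza, Nat.add_sub_cancel]
        exact (eq_take_of_mem_chainOf hz).symm

theorem hasPattern_mergeChains {x y : TreeVert a b} (hx : x.1.length = a - 1)
    (hy : y.1.length = a - 1) {l : ℕ} (hl : ∀ k, x.1.take k = y.1.take k ↔ k < l) :
    HasPattern (fun i : Fin (2 * a - l) => mergeChains x y l i) (chainOf x ∩ chainOf y)
      (chainOf x \ chainOf y) (chainOf y \ chainOf x) l a := by
  intro ⟨i, hi⟩
  dsimp only
  refine ⟨fun hil => ?_, fun hli hia => ?_, fun hai => ?_⟩
  · rw [mergeChains, if_pos (by omega), Finset.mem_inter]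
    exact ⟨take_mem_chainOf x i, (take_mem_chainOf_iff (by omega)).2 ((hl i).2 hil)⟩
  · rw [mergeChains, if_pos hia, Finset.mem_sdiff]
    exact ⟨take_mem_chainOf x i, fun h => by
      have := (hl i).1 ((take_mem_chainOf_iff (by omega)).1 h); omega⟩
  · rw [mergeChains, if_neg (by omega), Finset.mem_sdiff]
    exact ⟨take_mem_chainOf y _, fun h => by
      have := (hl _).1 ((take_mem_chainOf_iff (by omega)).1 h).symm; omega⟩

end TreeVert

open TreeVert

/-- The last condition says that the descendants of `u` form an interval. -/
structure IsDFSOrder {a b : ℕ} (r : TreeVert a b → TreeVert a b → Prop) : Prop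
    extends IsStrictOrder (TreeVert a b) r where
  trichotomous : ∀ u v, r u v ∨ u = v ∨ r v u
  lt_of_prefix : ∀ u v : TreeVert a b, u.1 <+: v.1 → u ≠ v → r u v
  prefix_of_between : ∀ u v w : TreeVert a b, u.1 <+: w.1 → ¬ r v u → ¬ r w v → u.1 <+: v.1

namespace IsDFSOrder

variable {a b : ℕ} {r : TreeVert a b → TreeVert a b → Prop}

theorem take_lt_take (hr : IsDFSOrder r) (x : TreeVert a b) {j k : ℕ} (hjk : j < k)
    (hk : k ≤ x.1.length) : r (x.take j) (x.take k) := by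
  refine hr.lt_of_prefix _ _ (List.prefix_take_iff.2 ⟨List.take_prefix j x.1, ?_⟩) fun h => ?_
  · simp only [take_val, List.length_take]
    omega
  · have := congrArg (fun u : TreeVert a b => u.1.length) h
    simp only [take_val, List.length_take] at this
    omega

theorem lt_of_lt_of_not_prefix (hr : IsDFSOrder r) {u v w : TreeVert a b} (huw : u.1 <+: w.1)
    (huv : r u v) (hvu : ¬ u.1 <+: v.1) : r w v := by
  by_contra hwv
  exact hvu (hr.prefix_of_between u v w huw (fun hvu => hr.irrefl u (hr.trans _ _ _ huv hvu)) hwv)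

theorem take_lt_take_of_branch (hr : IsDFSOrder r) {x y : TreeVert a b} {l : ℕ}
    (hl : ∀ k, x.1.take k = y.1.take k ↔ k < l) (hxy : r (x.take l) (y.take l))
    {j k : ℕ} (hlk : l ≤ k) (hlx : l ≤ x.1.length) (hlj : l ≤ j) (hjy : j ≤ y.1.length) :
    r (x.take k) (y.take j) := by
  refine hr.lt_of_lt_of_not_prefix (u := x.take l) ?_ ?_ fun h => ?_
  · exact List.prefix_take_iff.2 ⟨List.take_prefix l x.1, by simp [hlk]⟩
  · rcases hlj.eq_or_lt with rfl | hlj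
    · exact hxy
    · exact hr.trans _ _ _ hxy (hr.take_lt_take y hlj hjy)
  · rw [List.prefix_iff_eq_take, take_val, List.length_take, min_eq_left hlx, take_val,
      List.take_take, min_eq_left hlj] at h
    exact lt_irrefl l ((hl l).1 h)

theorem mergeChains_lt_mergeChains (hr : IsDFSOrder r) {x y : TreeVert a b}
    (hx : x.1.length = a - 1) (hy : y.1.length = a - 1) {l : ℕ}
    (hl : ∀ k, x.1.take k = y.1.take k ↔ k < l) (hxy : r (x.take l) (y.take l))
    {i j : ℕ} (hij : i < j) (hj : j < 2 * a - l) :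
    r (mergeChains x y l i) (mergeChains x y l j) := by
  unfold mergeChains
  split_ifs with hia hja hja
  · exact hr.take_lt_take x hij (by omega)
  · by_cases hil : i < l
    · rw [show x.take i = y.take i from Subtype.ext ((hl i).2 hil)]
      exact hr.take_lt_take y (by omega) (by omega)
    · exact hr.take_lt_take_of_branch hl hxy (by omega) (by omega) (by omega) (by omega)
  · omega
  · exact hr.take_lt_take y (by omega) (by omega)

theorem exists_hasPattern (hr : IsDFSOrder r) {x y : TreeVert a b} (hx : x.1.length = a - 1)
    (hy : y.1.length = a - 1) (hxy : x.1 ≠ y.1) :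
    ∃ l, 1 ≤ l ∧ l ≤ a - 1 ∧ ∃ v : Fin (2 * a - l) → TreeVert a b,
      (∀ i j, i < j → r (v i) (v j)) ∧
      ((chainOf x ∪ chainOf y : Finset _) : Set _) = Set.range v ∧
      (HasPattern v (chainOf x ∩ chainOf y) (chainOf x \ chainOf y) (chainOf y \ chainOf x) l a ∨
        HasPattern v (chainOf x ∩ chainOf y) (chainOf y \ chainOf x) (chainOf x \ chainOf y)
          l a) := by
  obtain ⟨l, hl⟩ := List.exists_take_eq_take_iff_lt hxy
  have hl1 : 1 ≤ l := (hl 0).1 rfl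
  have hla : l ≤ a - 1 := by
    by_contra! h
    apply hxy
    simpa only [List.take_of_length_le hx.le, List.take_of_length_le hy.le] using (hl (a - 1)).2 h
  refine ⟨l, hl1, hla, ?_⟩
  rcases hr.trichotomous (x.take l) (y.take l) with hlt | heq | hgt
  · exact ⟨_, fun i j hij => hr.mergeChains_lt_mergeChains hx hy hl hlt hij j.2,
      (range_mergeChains hl hla).symm, Or.inl (hasPattern_mergeChains hx hy hl)⟩
  · exact absurd ((hl l).1 (congrArg Subtype.val heq)) (lt_irrefl l)
  · have hl' : ∀ k, y.1.take k = x.1.take k ↔ k < l := fun k => eq_comm.trans (hl k)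
    refine ⟨_, fun i j hij => hr.mergeChains_lt_mergeChains hy hx hl' hgt hij j.2, ?_,
      Or.inr ?_⟩
    · rw [Finset.union_comm]
      exact (range_mergeChains hl' hla).symm
    · rw [Finset.inter_comm]
      exact hasPattern_mergeChains hy hx hl'

end IsDFSOrder

theorem stmt_17_general (a b : ℕ)
    (lt : TreeVert a b → TreeVert a b → Prop)
    (htri : ∀ u v, lt u v ∨ u = v ∨ lt v u)
    (hirr : ∀ u, ¬ lt u u)
    (htrans : ∀ u v w, lt u v → lt v w → lt u w)
    (hdfs₁ : ∀ u v : TreeVert a b, u.1 <+: v.1 → u ≠ v → lt u v)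
    (hdfs₂ : ∀ u v w : TreeVert a b, u.1 <+: w.1 → ¬ lt v u → ¬ lt w v → u.1 <+: v.1)
    (A B : Finset (TreeVert a b))
    (leafA leafB : TreeVert a b)
    (hA : leafA.1.length = a - 1) (hB : leafB.1.length = a - 1)
    (hAchain : A = chainOf leafA) (hBchain : B = chainOf leafB)
    (hAB : A ≠ B) :
    (∃ l : ℕ, 1 ≤ l ∧ l ≤ a - 1 ∧
      ∃ v : Fin (2 * a - l) → TreeVert a b,
        (∀ i j : Fin (2 * a - l), i < j → lt (v i) (v j)) ∧
        ((A ∪ B : Finset (TreeVert a b)) : Set (TreeVert a b)) = Set.range v ∧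
        ((∀ i : Fin (2 * a - l),
            ((i : ℕ) < l → v i ∈ A ∩ B) ∧
            (l ≤ (i : ℕ) → (i : ℕ) < a → v i ∈ A \ B) ∧
            (a ≤ (i : ℕ) → v i ∈ B \ A)) ∨
         (∀ i : Fin (2 * a - l),
            ((i : ℕ) < l → v i ∈ A ∩ B) ∧
            (l ≤ (i : ℕ) → (i : ℕ) < a → v i ∈ B \ A) ∧
            (a ≤ (i : ℕ) → v i ∈ A \ B)))) ∧
    ¬ ∃ (e₁ e₂ : Finset (TreeVert a b)), e₁ ∈ ({A, B} : Set (Finset (TreeVert a b))) ∧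
        e₂ ∈ ({A, B} : Set (Finset (TreeVert a b))) ∧ e₁ ≠ e₂ ∧
        ∃ w : Fin (a + 2) → TreeVert a b,
          (∀ i j : Fin (a + 2), i < j → lt (w i) (w j)) ∧
          ∀ i : Fin (a + 2), (Even (i : ℕ) → w i ∈ e₁) ∧ (¬ Even (i : ℕ) → w i ∈ e₂) := by
  subst hAchain hBchain
  have hr : IsDFSOrder lt :=
    { irrefl := hirr, trans := htrans, trichotomous := htri, lt_of_prefix := hdfs₁,
      prefix_of_between := hdfs₂ }
  have := hr.toIsStrictOrder
  have hne : leafA.1 ≠ leafB.1 := fun h => hAB (congrArg chainOf (Subtype.ext h))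
  obtain ⟨l, hl1, hla, v, hv, hrange, hpat⟩ := hr.exists_hasPattern hA hB hne
  exact ⟨⟨l, hl1, hla, v, hv, hrange, hpat⟩,
    not_interlacing_of_hasPattern hv hrange hpat (by omega)⟩

/-- With respect to any DFS order `lt` on `T(a,b)` (`a ≥ 3`), the pattern
of two distinct maximal chains `A`, `B` is `Iˡ A^(a-l) B^(a-l)` or `Iˡ B^(a-l) A^(a-l)`
for some `1 ≤ l ≤ a-1`; consequently `{A,B}` is at most `(a+1)`-interlacing, i.e. not
`(a+2)`-interlacing. -/
theorem stmt_17 (a b : ℕ) (ha : 3 ≤ a)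
    (lt : TreeVert a b → TreeVert a b → Prop)
    (htri : ∀ u v, lt u v ∨ u = v ∨ lt v u)
    (hirr : ∀ u, ¬ lt u u)
    (htrans : ∀ u v w, lt u v → lt v w → lt u w)
    (hdfs₁ : ∀ u v : TreeVert a b, u.1 <+: v.1 → u ≠ v → lt u v)
    (hdfs₂ : ∀ u v w : TreeVert a b, u.1 <+: w.1 → ¬ lt v u → ¬ lt w v → u.1 <+: v.1)
    (A B : Finset (TreeVert a b))
    (leafA leafB : TreeVert a b)
    (hA : leafA.1.length = a - 1) (hB : leafB.1.length = a - 1)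
    (hAchain : A = chainOf leafA) (hBchain : B = chainOf leafB)
    (hAB : A ≠ B) :
    (∃ l : ℕ, 1 ≤ l ∧ l ≤ a - 1 ∧
      ∃ v : Fin (2 * a - l) → TreeVert a b,
        (∀ i j : Fin (2 * a - l), i < j → lt (v i) (v j)) ∧
        ((A ∪ B : Finset (TreeVert a b)) : Set (TreeVert a b)) = Set.range v ∧
        ((∀ i : Fin (2 * a - l),
            ((i : ℕ) < l → v i ∈ A ∩ B) ∧
            (l ≤ (i : ℕ) → (i : ℕ) < a → v i ∈ A \ B) ∧
            (a ≤ (i : ℕ) → v i ∈ B \ A)) ∨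
         (∀ i : Fin (2 * a - l),
            ((i : ℕ) < l → v i ∈ A ∩ B) ∧
            (l ≤ (i : ℕ) → (i : ℕ) < a → v i ∈ B \ A) ∧
            (a ≤ (i : ℕ) → v i ∈ A \ B)))) ∧
    ¬ ∃ (e₁ e₂ : Finset (TreeVert a b)), e₁ ∈ ({A, B} : Set (Finset (TreeVert a b))) ∧
        e₂ ∈ ({A, B} : Set (Finset (TreeVert a b))) ∧ e₁ ≠ e₂ ∧
        ∃ w : Fin (a + 2) → TreeVert a b,
          (∀ i j : Fin (a + 2), i < j → lt (w i) (w j)) ∧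
          ∀ i : Fin (a + 2), (Even (i : ℕ) → w i ∈ e₁) ∧ (¬ Even (i : ℕ) → w i ∈ e₂) :=
  stmt_17_general a b lt htri hirr htrans hdfs₁ hdfs₂ A B leafA leafB hA hB hAchain hBchain hAB
end

section
/- Suppose S_1, ..., S_l ⊆ R^d are nonempty finite sets in skewed position, i.e., dim aff(S_1 ∪ ... ∪ S_l) = l - 1 + Σ_i dim aff(S_i). If each S_i is affinely independent, then S_1 ∪ ... ∪ S_l is affinely independent, and the geometric join S_1 * ... * S_l (the set of convex combinations Σ λ_i p_i with p_i ∈ conv(S_i), λ_i ≥ 0, Σ λ_i = 1) equals conv(S_1 ∪ ... ∪ S_l). -/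
/-!
Affine independence is a dimension count: an affinely independent finset `S i` has
`#(S i) = dim aff(S i) + 1`, so the union of the `l` sets has at most
`l + Σ i, dim aff(S i) = dim aff(⋃ i, S i) + 1` points, and a finset with no more points than
`dim aff + 1` is affinely independent.

The join identity holds for any nonempty sets: the join of the convex sets `conv(S i)` contains
every `S i` and is convex, because `a • (w i • p i) + b • (v i • q i)` is a nonnegative multiple
`(a * w i + b * v i) • r i` of a point `r i` of `conv(S i)`.
-/

open Finset Module

section AffineIndependence

variable {k V P : Type*} [DivisionRing k] [AddCommGroup V] [Module k V] [AddTorsor V P]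

theorem affineIndependent_iff_card_le_finrank_succ {ι : Type*} [Fintype ι] (p : ι → P) :
    AffineIndependent k p ↔ Fintype.card ι ≤ finrank k (vectorSpan k (Set.range p)) + 1 := by
  refine ⟨AffineIndependent.card_le_finrank_succ, fun h => ?_⟩
  cases isEmpty_or_nonempty ι
  · exact affineIndependent_of_subsingleton k p
  · rw [affineIndependent_iff_le_finrank_vectorSpan k p
      (Nat.sub_add_cancel Fintype.card_pos).symm]
    omega

theorem affineIndependent_finset_iff_card_le_finrank_succ (s : Finset P) :
    AffineIndependent k (Subtype.val : ↥(s : Set P) → P) ↔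
      #s ≤ finrank k (vectorSpan k (s : Set P)) + 1 := by
  rw [affineIndependent_iff_card_le_finrank_succ, Subtype.range_val]
  simp only [SetLike.mem_coe, Fintype.card_coe]

theorem affineIndependent_iUnion_of_finrank_eq {ι : Type*} [Fintype ι] (S : ι → Finset P)
    (hindep : ∀ i, AffineIndependent k (Subtype.val : ↥(S i : Set P) → P))
    (hskew : finrank k (affineSpan k (⋃ i, (S i : Set P))).direction =
      Fintype.card ι - 1 + ∑ i, finrank k (affineSpan k (S i : Set P)).direction) :
    AffineIndependent k (Subtype.val : ↥(⋃ i, (S i : Set P)) → P) := by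
  classical
  have hunion : (⋃ i, (S i : Set P)) = ↑(univ.biUnion S) := by simp
  have hcard i : #(S i) ≤ finrank k (vectorSpan k (S i : Set P)) + 1 :=
    (affineIndependent_finset_iff_card_le_finrank_succ (S i)).1 (hindep i)
  rw [sum_congr rfl fun i _ => by rw [direction_affineSpan], direction_affineSpan, hunion] at hskew
  rw [hunion, affineIndependent_finset_iff_card_le_finrank_succ, hskew]
  have hsum : #(univ.biUnion S) ≤ ∑ i, finrank k (vectorSpan k (S i : Set P)) + Fintype.card ι :=
    calc #(univ.biUnion S) ≤ ∑ i, #(S i) := card_biUnion_le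
      _ ≤ ∑ i, (finrank k (vectorSpan k (S i : Set P)) + 1) := sum_le_sum fun i _ => hcard i
      _ = _ := by rw [sum_add_distrib, sum_const, card_univ, smul_eq_mul, mul_one]
  omega

end AffineIndependence

section GeometricJoin

variable (𝕜 : Type*) {E ι : Type*} [Field 𝕜] [LinearOrder 𝕜] [IsStrictOrderedRing 𝕜]
  [AddCommGroup E] [Module 𝕜 E] [Fintype ι]

def geometricJoin (K : ι → Set E) : Set E :=
  {x | ∃ (w : ι → 𝕜) (p : ι → E), (∀ i, 0 ≤ w i) ∧ (∑ i, w i = 1) ∧ (∀ i, p i ∈ K i) ∧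
    x = ∑ i, w i • p i}

variable {𝕜}

theorem convex_geometricJoin {K : ι → Set E} (hK : ∀ i, Convex 𝕜 (K i)) :
    Convex 𝕜 (geometricJoin 𝕜 K) := by
  rintro _ ⟨w, p, hw, hw1, hp, rfl⟩ _ ⟨v, q, hv, hv1, hq, rfl⟩ a b ha hb hab
  choose r hr hr_eq using fun i =>
    (hK i).exists_mem_add_smul_eq (hp i) (hq i) (mul_nonneg ha (hw i)) (mul_nonneg hb (hv i))
  refine ⟨fun i => a * w i + b * v i, r,
    fun i => add_nonneg (mul_nonneg ha (hw i)) (mul_nonneg hb (hv i)), ?_, hr, ?_⟩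
  · rw [sum_add_distrib, ← mul_sum, ← mul_sum, hw1, hv1, mul_one, mul_one, hab]
  · simp only [hr_eq, smul_sum, smul_smul, sum_add_distrib]

theorem subset_geometricJoin [DecidableEq ι] {K : ι → Set E} (hK : ∀ i, (K i).Nonempty) (j : ι) :
    K j ⊆ geometricJoin 𝕜 K := by
  intro x hx
  refine ⟨Pi.single j 1, Function.update (fun i => (hK i).some) j x, Pi.single_nonneg.2 zero_le_one, by simp, ?_, ?_⟩
  · intro i
    rcases eq_or_ne i j with rfl | hij
    · simpa using hx
    · simpa [hij] using (hK i).some_mem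
  · simp [Pi.single_apply, ite_smul]

theorem geometricJoin_convexHull_subset (S : ι → Set E) :
    geometricJoin 𝕜 (fun i => convexHull 𝕜 (S i)) ⊆ convexHull 𝕜 (⋃ i, S i) := by
  rintro _ ⟨w, p, hw, hw1, hp, rfl⟩
  exact (convex_convexHull 𝕜 _).sum_mem (fun i _ => hw i) hw1
    fun i _ => convexHull_mono (Set.subset_iUnion S i) (hp i)

theorem convexHull_iUnion_eq_geometricJoin {S : ι → Set E} (hS : ∀ i, (S i).Nonempty) :
    convexHull 𝕜 (⋃ i, S i) = geometricJoin 𝕜 (fun i => convexHull 𝕜 (S i)) := by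
  classical
  refine (convexHull_min (Set.iUnion_subset fun i => ?_)
    (convex_geometricJoin fun i => convex_convexHull 𝕜 (S i))).antisymm
    (geometricJoin_convexHull_subset S)
  exact (subset_convexHull 𝕜 (S i)).trans
    (subset_geometricJoin (fun i => (hS i).convexHull) i)

end GeometricJoin

theorem stmt_19_general (d l : ℕ) (S : Fin l → Finset (Fin d → ℝ))
    (hne : ∀ i, (S i).Nonempty)
    (hindep : ∀ i, AffineIndependent ℝ
      (Subtype.val : ((S i : Set (Fin d → ℝ))) → (Fin d → ℝ)))
    (hskew : Module.finrank ℝ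
        (affineSpan ℝ (⋃ i, (S i : Set (Fin d → ℝ)))).direction =
      l - 1 + ∑ i, Module.finrank ℝ
        (affineSpan ℝ ((S i : Set (Fin d → ℝ)))).direction) :
    AffineIndependent ℝ
      (Subtype.val : (⋃ i, (S i : Set (Fin d → ℝ))) → (Fin d → ℝ)) ∧
    {x : Fin d → ℝ | ∃ (lam : Fin l → ℝ) (p : Fin l → (Fin d → ℝ)),
        (∀ i, 0 ≤ lam i) ∧ (∑ i, lam i = 1) ∧
        (∀ i, p i ∈ convexHull ℝ (S i : Set (Fin d → ℝ))) ∧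
        x = ∑ i, lam i • p i} =
      convexHull ℝ (⋃ i, (S i : Set (Fin d → ℝ))) :=
  ⟨affineIndependent_iUnion_of_finrank_eq S hindep (by rwa [Fintype.card_fin]),
    (convexHull_iUnion_eq_geometricJoin fun i => (hne i).to_set).symm⟩

/-- If nonempty finite sets `S 0, …, S (l-1) ⊆ ℝ^d` are in skewed
position, i.e. `dim aff(⋃ i, S i) = l - 1 + Σ i, dim aff(S i)`, and each `S i` is
affinely independent, then their union is affinely independent and their geometric
join (the set of convex combinations `Σ λ i • p i` with `p i ∈ conv(S i)`) equals
`conv(⋃ i, S i)`. -/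
theorem stmt_19 (d l : ℕ) (hl : 1 ≤ l) (S : Fin l → Finset (Fin d → ℝ))
    (hne : ∀ i, (S i).Nonempty)
    (hindep : ∀ i, AffineIndependent ℝ
      (Subtype.val : ((S i : Set (Fin d → ℝ))) → (Fin d → ℝ)))
    (hskew : Module.finrank ℝ
        (affineSpan ℝ (⋃ i, (S i : Set (Fin d → ℝ)))).direction =
      l - 1 + ∑ i, Module.finrank ℝ
        (affineSpan ℝ ((S i : Set (Fin d → ℝ)))).direction) :
    AffineIndependent ℝ
      (Subtype.val : (⋃ i, (S i : Set (Fin d → ℝ))) → (Fin d → ℝ)) ∧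
    {x : Fin d → ℝ | ∃ (lam : Fin l → ℝ) (p : Fin l → (Fin d → ℝ)),
        (∀ i, 0 ≤ lam i) ∧ (∑ i, lam i = 1) ∧
        (∀ i, p i ∈ convexHull ℝ (S i : Set (Fin d → ℝ))) ∧
        x = ∑ i, lam i • p i} =
      convexHull ℝ (⋃ i, (S i : Set (Fin d → ℝ))) :=
  stmt_19_general d l S hne hindep hskew
end
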